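/- arXiv:2106.02919 — 5 statements merged into one kernel-verified Lean document; each statement's English description precedes it below -/
import Mathlib

section
/- Let G be a simple graph with a pendant vertex v (a vertex of degree 1). Then the number of perfect matchings of the vertex-edge graph M(G) equals the number of perfect matchings of the vertex-edge graph M(G - v), where G - v is the graph obtained from G by deleting v (and its incident edge). -/
variable {V : Type*}

/-- The vertex-edge graph (middle graph) of `G`: vertices are `V(G) ⊕ E(G)`;
two `e`-vertices are adjacent iff the corresponding edges of `G` are distinct and share
an endpoint; a `v`-vertex and an `e`-vertex are adjacent iff the vertex is an endpoint of
the edge; no two `v`-vertices are adjacent. -/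
def middleGraph (G : SimpleGraph V) : SimpleGraph (V ⊕ G.edgeSet) where
  Adj a b :=
    match a, b with
    | Sum.inl _, Sum.inl _ => False
    | Sum.inl u, Sum.inr e => u ∈ (e : Sym2 V)
    | Sum.inr e, Sum.inl u => u ∈ (e : Sym2 V)
    | Sum.inr e, Sum.inr f => e ≠ f ∧ ∃ v, v ∈ (e : Sym2 V) ∧ v ∈ (f : Sym2 V)
  symm := ⟨by
    rintro (u | e) (v | f) h
    · exact h.elim
    · exact h
    · exact h
    · exact ⟨h.1.symm, h.2.imp fun v hv => ⟨hv.2, hv.1⟩⟩⟩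
  loopless := ⟨by
    rintro (u | e) h
    · exact h
    · exact h.1 rfl⟩

/-- The line graph of `G`, with vertex set the edge set of `G`; two edges are adjacent
iff they are distinct and share an endpoint. -/
def lineGraph (G : SimpleGraph V) : SimpleGraph G.edgeSet where
  Adj e f := e ≠ f ∧ ∃ v, v ∈ (e : Sym2 V) ∧ v ∈ (f : Sym2 V)
  symm := ⟨fun e f h => ⟨h.1.symm, h.2.imp fun v hv => ⟨hv.2, hv.1⟩⟩⟩
  loopless := ⟨fun e h => h.1 rfl⟩

/-- `P` is a perfect matching (dimer covering) of `H`, viewed as a set of edges: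
all members are edges of `H`, distinct members share no vertex, and every vertex of `H`
lies in some member. -/
def IsPerfMatchSet {W : Type*} (H : SimpleGraph W) (P : Set (Sym2 W)) : Prop :=
  P ⊆ H.edgeSet ∧
  (∀ p ∈ P, ∀ q ∈ P, p ≠ q → ∀ a, a ∈ p → a ∉ q) ∧
  (∀ w : W, ∃ p ∈ P, w ∈ p)

/-- The number of perfect matchings (dimer coverings) of `H`. -/
noncomputable def pmCount {W : Type*} (H : SimpleGraph W) : ℕ :=
  {P : Set (Sym2 W) | IsPerfMatchSet H P}.ncard

/-! In `M(G)` the vertex `v` has the single neighbour `e = vu`, so every perfect matching of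
`M(G)` contains the edge `{v, e}`. Deleting `v` and `e` from `M(G)` leaves exactly the image of
`M(G - v)` under the embedding induced by `G - v ↪ G`, and the remaining edges of the matching
form a perfect matching of that copy. -/

open SimpleGraph Function

lemma Sym2.apply_mem_map_iff {α β : Type*} {f : α → β} (hf : Injective f) {a : α}
    {z : Sym2 α} : f a ∈ z.map f ↔ a ∈ z := by
  rw [Sym2.mem_map]
  exact ⟨fun ⟨b, hb, hba⟩ => hf hba ▸ hb, fun h => ⟨a, h, rfl⟩⟩

lemma Sym2.mem_range_map {α β : Type*} {f : α → β} {z : Sym2 β}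
    (h : ∀ x ∈ z, x ∈ Set.range f) : z ∈ Set.range (Sym2.map f) := by
  induction z using Sym2.ind with
  | _ x y =>
    obtain ⟨a, rfl⟩ := h x (Sym2.mem_mk_left x y)
    obtain ⟨b, rfl⟩ := h y (Sym2.mem_mk_right _ y)
    exact ⟨s(a, b), Sym2.map_mk _ _ _⟩

lemma Sum.inl_mem_range_map {α β γ δ : Type*} {f : α → γ} {g : β → δ} {c : γ} :
    Sum.inl c ∈ Set.range (Sum.map f g) ↔ c ∈ Set.range f := by
  simp [Sum.exists]

lemma Sum.inr_mem_range_map {α β γ δ : Type*} {f : α → γ} {g : β → δ} {d : δ} :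
    Sum.inr d ∈ Set.range (Sum.map f g) ↔ d ∈ Set.range g := by
  simp [Sum.exists]

section PerfMatch

variable {W W' : Type*} {H : SimpleGraph W} {H' : SimpleGraph W'}

lemma isPerfMatchSet_iff {P : Set (Sym2 W)} :
    IsPerfMatchSet H P ↔ P ⊆ H.edgeSet ∧ P.Pairwise (fun p q => ∀ x ∈ p, x ∉ q) ∧
      ∀ w, ∃ p ∈ P, w ∈ p :=
  Iff.rfl

lemma IsPerfMatchSet.mk_mem_of_neighborSet_eq {P : Set (Sym2 W)} {a b : W}
    (hP : IsPerfMatchSet H P) (hab : H.neighborSet a = {b}) : s(a, b) ∈ P := by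
  obtain ⟨p, hp, hap⟩ := hP.2.2 a
  obtain ⟨c, rfl⟩ := Sym2.mem_iff_exists.mp hap
  have hc : c ∈ H.neighborSet a := hP.1 hp
  rw [hab] at hc
  exact hc ▸ hp

variable (f : H' ↪g H) {a b : W}

lemma apply_notMem_mk_of_range_eq (hf : Set.range f = {a, b}ᶜ) (w : W') : f w ∉ s(a, b) := by
  have : f w ∈ ({a, b} : Set W)ᶜ := hf ▸ Set.mem_range_self w
  simpa [Sym2.mem_iff] using this

lemma mk_notMem_image_map_of_range_eq (hf : Set.range f = {a, b}ᶜ) (Q : Set (Sym2 W')) :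
    s(a, b) ∉ Sym2.map f '' Q := by
  rintro ⟨q, -, hq⟩
  obtain ⟨w, -, hw⟩ := Sym2.mem_map.mp (hq ▸ Sym2.mem_mk_left a b : a ∈ Sym2.map f q)
  exact apply_notMem_mk_of_range_eq f hf w (hw ▸ Sym2.mem_mk_left a b)

lemma isPerfMatchSet_insert_image_iff (hab : H.Adj a b) (hf : Set.range f = {a, b}ᶜ)
    (Q : Set (Sym2 W')) :
    IsPerfMatchSet H (insert s(a, b) (Sym2.map f '' Q)) ↔ IsPerfMatchSet H' Q := by
  have hm := apply_notMem_mk_of_range_eq f hf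
  have hmQ := mk_notMem_image_map_of_range_eq f hf Q
  rw [isPerfMatchSet_iff, isPerfMatchSet_iff]
  refine and_congr ?edges (and_congr ?disjoint ?covering)
  case edges =>
    rw [Set.insert_subset_iff, Set.image_subset_iff, f.preimage_edgeSet]
    exact and_iff_right hab
  case disjoint =>
    rw [Set.pairwise_insert_of_notMem hmQ,
      (Sym2.map.injective f.injective).injOn.pairwise_image]
    have hcross : ∀ p ∈ Sym2.map f '' Q, (∀ x ∈ s(a, b), x ∉ p) ∧ ∀ x ∈ p, x ∉ s(a, b) := by
      rintro _ ⟨q, -, rfl⟩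
      refine ⟨fun x hx hxq => ?_, fun x hxq hx => ?_⟩ <;>
      · obtain ⟨w, -, rfl⟩ := Sym2.mem_map.mp hxq
        exact hm w hx
    have hon : ((fun p q => ∀ x ∈ p, x ∉ q) on Sym2.map f) = fun p q => ∀ x ∈ p, x ∉ q := by
      ext p q
      have hmap := @Sym2.apply_mem_map_iff _ _ _ f.injective
      refine ⟨fun h x hxp hxq => h (f x) (hmap.2 hxp) (hmap.2 hxq), ?_⟩
      rintro h _ hx hxq
      obtain ⟨x, hxp, rfl⟩ := Sym2.mem_map.mp hx
      exact h x hxp (hmap.1 hxq)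
    rw [hon, and_iff_left hcross]
  case covering =>
    simp only [Set.exists_mem_insert, Set.exists_mem_image]
    constructor
    · intro h w
      simpa [hm w, Sym2.apply_mem_map_iff f.injective] using h (f w)
    · intro h w
      by_cases hw : w ∈ Set.range f
      · obtain ⟨w, rfl⟩ := hw
        obtain ⟨q, hq, hwq⟩ := h w
        exact Or.inr ⟨q, hq, (Sym2.apply_mem_map_iff f.injective).mpr hwq⟩
      · left
        simpa [hf, Sym2.mem_iff, or_iff_not_imp_left] using hw

lemma IsPerfMatchSet.insert_image_preimage_eq {P : Set (Sym2 W)} (hP : IsPerfMatchSet H P)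
    (hab : H.neighborSet a = {b}) (hf : Set.range f = {a, b}ᶜ) :
    insert s(a, b) (Sym2.map f '' (Sym2.map f ⁻¹' P)) = P := by
  have hmP := hP.mk_mem_of_neighborSet_eq hab
  have hPsub : P ⊆ insert s(a, b) (Set.range (Sym2.map f)) := by
    intro p hp
    refine or_iff_not_imp_left.mpr fun hne => Sym2.mem_range_map fun x hx => ?_
    have hxm : x ∉ s(a, b) := hP.2.1 p hp _ hmP hne x hx
    simpa [hf, Sym2.mem_iff, not_or] using hxm
  rw [Set.image_preimage_eq_inter_range, Set.insert_inter_distrib, Set.insert_eq_of_mem hmP,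
    Set.inter_eq_left.mpr hPsub]

/-- Every perfect matching of `H` contains `s(a, b)`, and the rest of it is the image of a
perfect matching of `H'`. -/
theorem pmCount_eq_of_range_eq_compl_pair (hab : H.neighborSet a = {b})
    (hf : Set.range f = {a, b}ᶜ) : pmCount H = pmCount H' := by
  have hadj : H.Adj a b := (hab ▸ Set.mem_singleton b : b ∈ H.neighborSet a)
  set F : Set (Sym2 W') → Set (Sym2 W) := fun Q => insert s(a, b) (Sym2.map f '' Q)
  have hF : ∀ Q, IsPerfMatchSet H (F Q) ↔ IsPerfMatchSet H' Q :=
    isPerfMatchSet_insert_image_iff f hadj hf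
  have hFinj : Injective F := by
    intro Q₁ Q₂ h
    have h' := congrArg (· \ {s(a, b)}) h
    simp only [F, Set.insert_sdiff_self_of_notMem (mk_notMem_image_map_of_range_eq f hf _)] at h'
    exact Set.image_injective.mpr (Sym2.map.injective f.injective) h'
  have hset : {P | IsPerfMatchSet H P} = F '' {Q | IsPerfMatchSet H' Q} := by
    ext P
    refine ⟨fun hP => ?_, ?_⟩
    · have hFP : F (Sym2.map f ⁻¹' P) = P := hP.insert_image_preimage_eq f hab hf
      exact ⟨_, (hF _).mp (by rwa [hFP]), hFP⟩
    · rintro ⟨Q, hQ, rfl⟩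
      exact (hF Q).mpr hQ
  rw [pmCount, pmCount, hset, hFinj.injOn.ncard_image]

end PerfMatch

namespace SimpleGraph

variable {V V' : Type*} {G : SimpleGraph V} {G' : SimpleGraph V'}

lemma Embedding.range_mapEdgeSet_induce (S : Set V) :
    Set.range (Embedding.induce (G := G) S).mapEdgeSet =
      {e : G.edgeSet | ∀ x ∈ (e : Sym2 V), x ∈ S} := by
  ext ⟨e, he⟩
  constructor
  · rintro ⟨⟨e', _⟩, h⟩ x hx
    obtain rfl : Sym2.map (↑) e' = e := congrArg Subtype.val h
    obtain ⟨y, -, rfl⟩ := Sym2.mem_map.mp hx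
    exact y.2
  · intro hS
    obtain ⟨e', rfl⟩ := Sym2.mem_range_map (f := ((↑) : S → V)) fun x hx =>
      ⟨⟨x, hS x hx⟩, rfl⟩
    exact ⟨⟨e', (Embedding.induce S).map_mem_edgeSet_iff.mp he⟩, rfl⟩

def Embedding.middleGraphMap (φ : G ↪g G') : middleGraph G ↪g middleGraph G' where
  toFun := Sum.map φ φ.mapEdgeSet
  inj' := Sum.map_injective.mpr ⟨φ.injective, φ.mapEdgeSet.injective⟩
  map_rel_iff' := by
    have hmap := @Sym2.apply_mem_map_iff _ _ _ φ.injective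
    rintro (u | e) (w | e')
    · exact Iff.rfl
    · exact hmap
    · exact hmap
    · refine and_congr φ.mapEdgeSet.injective.ne_iff ⟨?_, ?_⟩
      · rintro ⟨_, hx, hx'⟩
        obtain ⟨x, hxe, rfl⟩ := Sym2.mem_map.mp hx
        exact ⟨x, hxe, hmap.mp hx'⟩
      · rintro ⟨x, hxe, hxe'⟩
        exact ⟨φ x, hmap.mpr hxe, hmap.mpr hxe'⟩

variable {v u : V}

lemma eq_mk_of_neighborSet_eq_singleton (hu : G.neighborSet v = {u}) {e : Sym2 V}
    (he : e ∈ G.edgeSet) (hv : v ∈ e) : e = s(v, u) := by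
  obtain ⟨w, rfl⟩ := Sym2.mem_iff_exists.mp hv
  have hw : w ∈ G.neighborSet v := he
  rw [hu, Set.mem_singleton_iff] at hw
  rw [hw]

def pendantEdge (hu : G.neighborSet v = {u}) : G.edgeSet :=
  ⟨s(v, u), (hu ▸ Set.mem_singleton u : u ∈ G.neighborSet v)⟩

lemma mem_iff_eq_pendantEdge (hu : G.neighborSet v = {u}) {e : G.edgeSet} :
    v ∈ (e : Sym2 V) ↔ e = pendantEdge hu :=
  ⟨fun hv => Subtype.ext (eq_mk_of_neighborSet_eq_singleton hu e.2 hv),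
    fun h => h ▸ Sym2.mem_mk_left v u⟩

lemma neighborSet_middleGraph_inl (hu : G.neighborSet v = {u}) :
    (middleGraph G).neighborSet (Sum.inl v) = {Sum.inr (pendantEdge hu)} := by
  ext (w | e)
  · exact iff_of_false id Sum.inl_ne_inr
  · exact (mem_iff_eq_pendantEdge hu).trans Sum.inr_injective.eq_iff.symm

lemma range_middleGraphMap_induce_ne (hu : G.neighborSet v = {u}) :
    Set.range (Embedding.induce (G := G) {w | w ≠ v}).middleGraphMap =
      {Sum.inl v, Sum.inr (pendantEdge hu)}ᶜ := by
  ext (w | e)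
  · rw [Embedding.middleGraphMap, RelEmbedding.coe_mk, Function.Embedding.coeFn_mk,
      Sum.inl_mem_range_map]
    simp
  · rw [Embedding.middleGraphMap, RelEmbedding.coe_mk, Function.Embedding.coeFn_mk,
      Sum.inr_mem_range_map, Embedding.range_mapEdgeSet_induce]
    simp only [Set.mem_compl_iff, Set.mem_insert_iff, Set.mem_singleton_iff, reduceCtorEq,
      Sum.inr.injEq, false_or, ← mem_iff_eq_pendantEdge hu, Set.mem_ofPred_eq]
    exact ⟨fun h hv => h v hv rfl, fun h x hx hxv => h (hxv ▸ hx)⟩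

end SimpleGraph

theorem middle_graph_pm_delete_pendant_general {V : Type*} [Fintype V]
    (G : SimpleGraph V) [DecidableRel G.Adj] (v : V) (hv : G.degree v = 1) :
    pmCount (middleGraph G) = pmCount (middleGraph (G.induce {w | w ≠ v})) := by
  obtain ⟨u, hu, hu_unique⟩ := degree_eq_one_iff_existsUnique_adj.mp hv
  have hvu : G.neighborSet v = {u} := Set.eq_singleton_iff_unique_mem.mpr ⟨hu, hu_unique⟩
  exact pmCount_eq_of_range_eq_compl_pair (Embedding.induce _).middleGraphMap
    (neighborSet_middleGraph_inl hvu) (range_middleGraphMap_induce_ne hvu)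

/-- If `v` is a pendant vertex of `G`, then the vertex-edge graphs of `G`
and of `G - v` have the same number of perfect matchings. -/
theorem middle_graph_pm_delete_pendant {V : Type*} [Fintype V] [DecidableEq V]
    (G : SimpleGraph V) [DecidableRel G.Adj] (v : V) (hv : G.degree v = 1) :
    pmCount (middleGraph G) = pmCount (middleGraph (G.induce {w | w ≠ v})) :=
  middle_graph_pm_delete_pendant_general G v hv
end

section
/- Let G be a connected cubic (3-regular) simple graph with n vertices and m = 3n/2 edges, where m is even. Then the number of perfect matchings of the vertex-edge graph M(G) equals 2^(m-n+1) · 3^((2n-m)/2) = 2^(n/2 + 1) · 3^(n/4). -/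
variable {V : Type*}

/-!
Every edge of `M(G)` lies in exactly one of the cliques `{v} ∪ {edges at v}`. Hence a perfect
matching of `M(G)` amounts to an orientation `σ` of `G` (each edge points to the vertex whose
clique matches it) together with a perfect matching of each clique `{v} ∪ σ⁻¹(v)`; this clique
has `d_σ(v) + 1` vertices, so it has `d_σ(v)‼` perfect matchings if `d_σ(v)` is odd and none
otherwise. In a cubic graph odd in-degrees are `1` or `3`, and since they sum to `m`, the product
of the `d_σ(v)‼` is `3^((m-n)/2)`.

Recording an orientation by the set of edges on which it differs from a fixed orientation `τ`
turns the orientations with all in-degrees odd into a fibre of the incidence map `𝔽₂^E → 𝔽₂^V`,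
over the vector `1 + d_τ`. For connected `G` the image of this map is the hyperplane of vectors
with coordinate sum zero, so its kernel has dimension `m - n + 1`; and `1 + d_τ` lies in the
image because its coordinate sum is `n + m`, which is even.
-/

open Finset
open scoped Nat

section

variable {W ι : Type*}

/-- `Q` is a perfect matching of the complete graph on `T`. -/
structure IsPairing (T : Set W) (Q : Set (Sym2 W)) : Prop where
  not_isDiag : ∀ p ∈ Q, ¬ p.IsDiag
  disjoint : ∀ p ∈ Q, ∀ q ∈ Q, p ≠ q → ∀ a ∈ p, a ∉ q
  mem_iff : ∀ w, w ∈ T ↔ ∃ p ∈ Q, w ∈ p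

namespace IsPairing

variable {T : Set W} {Q : Set (Sym2 W)}

lemma eq_of_mem (h : IsPairing T Q) {p q : Sym2 W} {a : W} (hp : p ∈ Q) (hq : q ∈ Q)
    (hap : a ∈ p) (haq : a ∈ q) : p = q :=
  of_not_not fun hne => h.disjoint p hp q hq hne a hap haq

lemma mem_of_mem (h : IsPairing T Q) {p : Sym2 W} {a : W} (hp : p ∈ Q) (ha : a ∈ p) : a ∈ T :=
  (h.mem_iff a).2 ⟨p, hp, ha⟩

lemma exists_partner (h : IsPairing T Q) {a : W} (ha : a ∈ T) : ∃ b, s(a, b) ∈ Q := by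
  obtain ⟨p, hp, hap⟩ := (h.mem_iff a).1 ha
  exact ⟨Sym2.Mem.other hap, (Sym2.other_spec hap).symm ▸ hp⟩

lemma partner_unique (h : IsPairing T Q) {a b c : W} (hb : s(a, b) ∈ Q) (hc : s(a, c) ∈ Q) :
    b = c :=
  Sym2.congr_right.mp (h.eq_of_mem hb hc (Sym2.mem_mk_left a b) (Sym2.mem_mk_left a c))

lemma partner_ne (h : IsPairing T Q) {a b : W} (hb : s(a, b) ∈ Q) : b ≠ a :=
  fun hba => h.not_isDiag _ hb (Sym2.mk_isDiag_iff.mpr hba.symm)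

lemma insert_mk {a b : W} (h : IsPairing T Q) (ha : a ∉ T) (hb : b ∉ T) (hab : a ≠ b) :
    IsPairing (insert a (insert b T)) (insert s(a, b) Q) := by
  refine ⟨?_, ?_, fun w => ?_⟩
  · rintro p (rfl | hp)
    exacts [Sym2.mk_isDiag_iff.not.mpr hab, h.not_isDiag p hp]
  · have fresh : ∀ q ∈ Q, ∀ x ∈ s(a, b), x ∉ q := by
      rintro q hq x hx hxq
      rcases Sym2.mem_iff.mp hx with rfl | rfl
      exacts [ha (h.mem_of_mem hq hxq), hb (h.mem_of_mem hq hxq)]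
    rintro p (rfl | hp) q (rfl | hq) hpq x hxp hxq
    · exact hpq rfl
    · exact fresh q hq x hxp hxq
    · exact fresh p hp x hxq hxp
    · exact h.disjoint p hp q hq hpq x hxp hxq
  · simp only [Set.mem_insert_iff, exists_eq_or_imp, Sym2.mem_iff, h.mem_iff w]
    tauto

lemma sdiff_mk {a b : W} (h : IsPairing T Q) (hab : s(a, b) ∈ Q) :
    IsPairing (T \ {a, b}) (Q \ {s(a, b)}) := by
  refine ⟨fun p hp => h.not_isDiag p hp.1, fun p hp q hq hpq => h.disjoint p hp.1 q hq.1 hpq,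
    fun w => ?_⟩
  simp only [Set.mem_sdiff, Set.mem_insert_iff, Set.mem_singleton_iff, h.mem_iff w]
  constructor
  · rintro ⟨⟨p, hp, hwp⟩, hw⟩
    refine ⟨p, ⟨hp, fun hpab => hw ?_⟩, hwp⟩
    rw [hpab] at hwp
    exact Sym2.mem_iff.mp hwp
  · rintro ⟨p, ⟨hp, hpab⟩, hwp⟩
    refine ⟨⟨p, hp, hwp⟩, ?_⟩
    rintro (rfl | rfl)
    exacts [hpab (h.eq_of_mem hp hab hwp (Sym2.mem_mk_left _ _)),
      hpab (h.eq_of_mem hp hab hwp (Sym2.mem_mk_right _ _))]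

end IsPairing

lemma isPairing_empty_iff {Q : Set (Sym2 W)} : IsPairing ∅ Q ↔ Q = ∅ := by
  refine ⟨fun h => Set.eq_empty_of_forall_notMem fun p hp => ?_, ?_⟩
  · exact h.mem_of_mem hp (Sym2.out_fst_mem p)
  · rintro rfl
    exact ⟨by simp, by simp, by simp⟩

lemma IsPairing.insert_of_sdiff [DecidableEq W] {T : Finset W} {Q : Set (Sym2 W)} {a b : W}
    (h : IsPairing ((T \ {a, b} : Finset W) : Set W) Q) (ha : a ∈ T) (hb : b ∈ T.erase a) :
    IsPairing (T : Set W) (insert s(a, b) Q) := by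
  have hT : (T : Set W) = insert a (insert b ↑(T \ {a, b})) := by
    ext x
    simp only [coe_sdiff, coe_insert, coe_singleton, Set.mem_insert_iff, Set.mem_sdiff,
      Set.mem_singleton_iff, mem_coe]
    have := mem_of_mem_erase hb
    by_cases hxa : x = a <;> by_cases hxb : x = b <;> simp_all
  rw [hT]
  exact h.insert_mk (by simp) (by simp) (Ne.symm (ne_of_mem_erase hb))

noncomputable def pairingsEquivSigma [DecidableEq W] {T : Finset W} {a : W} (ha : a ∈ T) :
    {Q // IsPairing (T : Set W) Q} ≃
      Σ b : T.erase a, {Q // IsPairing ((T \ {a, (b : W)} : Finset W) : Set W) Q} where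
  toFun Q :=
    let b := Classical.choose (Q.2.exists_partner ha)
    have hb : s(a, b) ∈ Q.1 := Classical.choose_spec (Q.2.exists_partner ha)
    ⟨⟨b, mem_erase.mpr ⟨Q.2.partner_ne hb, Q.2.mem_of_mem hb (Sym2.mem_mk_right a b)⟩⟩,
      Q.1 \ {s(a, b)}, by push_cast; exact Q.2.sdiff_mk hb⟩
  invFun bQ := ⟨insert s(a, bQ.1) bQ.2.1, bQ.2.2.insert_of_sdiff ha bQ.1.2⟩
  left_inv Q := Subtype.ext (Set.insert_sdiff_singleton.trans
    (Set.insert_eq_of_mem (Classical.choose_spec (Q.2.exists_partner ha))))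
  right_inv := by
    rintro ⟨⟨b, hb⟩, Q, hQ⟩
    have hQ' := hQ.insert_of_sdiff ha hb
    have hb' := Classical.choose_spec (hQ'.exists_partner ha)
    have hbb : Classical.choose (hQ'.exists_partner ha) = b :=
      hQ'.partner_unique hb' (Set.mem_insert _ _)
    refine Sigma.subtype_ext (Subtype.ext hbb) ?_
    dsimp only
    rw [hbb]
    refine Set.insert_sdiff_self_of_notMem fun hab => ?_
    simpa using hQ.mem_of_mem hab (Sym2.mem_mk_left a b)

lemma finite_pairings (T : Finset W) : Finite {Q // IsPairing (T : Set W) Q} :=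
  Set.Finite.to_subtype <| (T.sym2 : Set (Sym2 W)).toFinite.finite_subsets.subset
    fun _ hQ _ hp => mem_sym2_iff.mpr fun _ ha => hQ.mem_of_mem hp ha

lemma mul_ite_doubleFactorial (n : ℕ) :
    n * (if Even (n - 1) then (n - 2)‼ else 0) = if Even (n + 1) then n‼ else 0 := by
  rcases n with _ | _ | n
  · simp
  · simp
  · have hpar : Even (n + 1 + 1 + 1) ↔ Even (n + 1) := by simp [Nat.even_add_one]
    simp only [show n + 1 + 1 - 1 = n + 1 by omega, show n + 1 + 1 - 2 = n by omega, hpar,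
      show (n + 1 + 1)‼ = (n + 2) * n‼ from Nat.doubleFactorial_add_two n, mul_ite, mul_zero]

lemma doubleFactorial_eq_three_pow {d : ℕ} (hd : Odd d) (h3 : d ≤ 3) : d‼ = 3 ^ (d / 2) := by
  obtain ⟨k, rfl⟩ := hd
  obtain rfl | rfl : k = 0 ∨ k = 1 := by omega
  all_goals rfl

theorem card_pairings [DecidableEq W] (T : Finset W) :
    Nat.card {Q // IsPairing (T : Set W) Q} = if Even #T then (#T - 1)‼ else 0 := by
  induction hn : #T using Nat.strong_induction_on generalizing T with
  | _ n ih =>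
  obtain rfl | ⟨a, ha⟩ := T.eq_empty_or_nonempty
  · subst hn
    rw [card_empty, if_pos (by decide), coe_empty]
    change Nat.card _ = 1
    rw [Nat.card_eq_one_iff_unique]
    refine ⟨⟨fun Q R => Subtype.ext ?_⟩, ⟨⟨∅, isPairing_empty_iff.mpr rfl⟩⟩⟩
    rw [isPairing_empty_iff.mp Q.2, isPairing_empty_iff.mp R.2]
  · have := fun b => finite_pairings (W := W) (T \ {a, b})
    have hpos : 0 < n := hn ▸ card_pos.mpr ⟨a, ha⟩
    have hcard : ∀ b : T.erase a, #(T \ {a, (b : W)}) = n - 2 := by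
      intro ⟨b, hb⟩
      rw [card_sdiff_of_subset (insert_subset ha (singleton_subset_iff.mpr (mem_of_mem_erase hb))),
        card_pair (ne_of_mem_erase hb).symm, hn]
    rw [Nat.card_congr (pairingsEquivSigma ha), Nat.card_sigma]
    simp only [fun b : T.erase a => ih _ (by omega) (T \ {a, (b : W)}) (hcard b), sum_const,
      Finset.card_univ, Fintype.card_coe, card_erase_of_mem ha, smul_eq_mul, hn]
    obtain ⟨k, rfl⟩ : ∃ k, n = k + 1 := ⟨n - 1, by omega⟩
    rw [Nat.add_sub_cancel, show k + 1 - 2 = k - 1 by omega, show k - 1 - 1 = k - 2 by omega]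
    exact mul_ite_doubleFactorial k

lemma Sym2.eq_of_ne_of_mem_of_mem {e f : Sym2 W} (hef : e ≠ f) {v v' : W} (hve : v ∈ e)
    (hvf : v ∈ f) (hv'e : v' ∈ e) (hv'f : v' ∈ f) : v = v' :=
  of_not_not fun hne => hef <|
    ((Sym2.mem_and_mem_iff hne).mp ⟨hve, hv'e⟩).trans
      ((Sym2.mem_and_mem_iff hne).mp ⟨hvf, hv'f⟩).symm

namespace SimpleGraph

structure IsCliquePartition (H : SimpleGraph W) (S : ι → Set W) : Prop where
  adj_iff : ∀ x y, H.Adj x y ↔ x ≠ y ∧ ∃ i, x ∈ S i ∧ y ∈ S i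
  eq_of_mem : ∀ ⦃x y i j⦄, x ≠ y → x ∈ S i → y ∈ S i → x ∈ S j → y ∈ S j → i = j

namespace IsCliquePartition

variable {H : SimpleGraph W} {S : ι → Set W} {P : Set (Sym2 W)}

lemma exists_forall_mem (hS : H.IsCliquePartition S) {p : Sym2 W} (hp : p ∈ H.edgeSet) :
    ∃ i, ∀ x ∈ p, x ∈ S i := by
  induction p using Sym2.ind with
  | _ x y =>
  obtain ⟨-, i, hx, hy⟩ := (hS.adj_iff x y).mp hp
  exact ⟨i, fun z hz => by rcases Sym2.mem_iff.mp hz with rfl | rfl <;> assumption⟩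

lemma eq_of_forall_mem (hS : H.IsCliquePartition S) {p : Sym2 W} (hp : p ∈ H.edgeSet) {i j : ι}
    (hi : ∀ x ∈ p, x ∈ S i) (hj : ∀ x ∈ p, x ∈ S j) : i = j := by
  induction p using Sym2.ind with
  | _ x y =>
  exact hS.eq_of_mem (H.ne_of_adj hp) (hi x (Sym2.mem_mk_left x y)) (hi y (Sym2.mem_mk_right x y))
    (hj x (Sym2.mem_mk_left x y)) (hj y (Sym2.mem_mk_right x y))

lemma exists_clique_of_isPerfMatchSet (hS : H.IsCliquePartition S) (hP : IsPerfMatchSet H P)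
    (w : W) :
    ∃ i, ∃ p ∈ P, w ∈ p ∧ ∀ x ∈ p, x ∈ S i := by
  obtain ⟨p, hp, hw⟩ := hP.2.2 w
  obtain ⟨i, hi⟩ := hS.exists_forall_mem (hP.1 hp)
  exact ⟨i, p, hp, hw, hi⟩

noncomputable def cliqueIndex (hS : H.IsCliquePartition S) (hP : IsPerfMatchSet H P) (w : W) : ι :=
  Classical.choose (hS.exists_clique_of_isPerfMatchSet hP w)

lemma cliqueIndex_eq_iff (hS : H.IsCliquePartition S) (hP : IsPerfMatchSet H P) {p : Sym2 W}
    {w : W} (hp : p ∈ P) (hw : w ∈ p) {i : ι} :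
    hS.cliqueIndex hP w = i ↔ ∀ x ∈ p, x ∈ S i := by
  obtain ⟨p', hp', hwp', hp'S⟩ := Classical.choose_spec (hS.exists_clique_of_isPerfMatchSet hP w)
  obtain rfl : p' = p := of_not_not fun hne => hP.2.1 p' hp' p hp hne w hwp' hw
  exact ⟨fun h => h ▸ hp'S, hS.eq_of_forall_mem (hP.1 hp) hp'S⟩

lemma cliqueIndex_mem (hS : H.IsCliquePartition S) (hP : IsPerfMatchSet H P) (w : W) :
    w ∈ S (hS.cliqueIndex hP w) := by
  obtain ⟨p, hp, hw⟩ := hP.2.2 w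
  exact (hS.cliqueIndex_eq_iff hP hp hw).mp rfl w hw

lemma isPairing_cliqueIndex (hS : H.IsCliquePartition S) (hP : IsPerfMatchSet H P) (i : ι) :
    IsPairing {w | hS.cliqueIndex hP w = i} {p ∈ P | ∀ x ∈ p, x ∈ S i} := by
  refine ⟨fun p hp => H.not_isDiag_of_mem_edgeSet (hP.1 hp.1),
    fun p hp q hq => hP.2.1 p hp.1 q hq.1, fun w => ⟨fun hw => ?_, ?_⟩⟩
  · obtain ⟨p, hp, hwp⟩ := hP.2.2 w
    exact ⟨p, ⟨hp, (hS.cliqueIndex_eq_iff hP hp hwp).mp hw⟩, hwp⟩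
  · rintro ⟨p, ⟨hp, hpS⟩, hwp⟩
    exact (hS.cliqueIndex_eq_iff hP hp hwp).mpr hpS

lemma mem_of_mem_pairing_fiber {a : W → ι} (ha : ∀ w, w ∈ S (a w)) {i : ι} {Q : Set (Sym2 W)}
    (hQ : IsPairing {w | a w = i} Q) {p : Sym2 W} (hp : p ∈ Q) {x : W} (hx : x ∈ p) : x ∈ S i :=
  (hQ.mem_of_mem hp hx : a x = i) ▸ ha x

lemma isPerfMatchSet_iUnion (hS : H.IsCliquePartition S) {a : W → ι} {Q : ι → Set (Sym2 W)}
    (ha : ∀ w, w ∈ S (a w)) (hQ : ∀ i, IsPairing {w | a w = i} (Q i)) :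
    IsPerfMatchSet H (⋃ i, Q i) := by
  have mem_S {i p x} (hp : p ∈ Q i) (hx : x ∈ p) : x ∈ S i :=
    mem_of_mem_pairing_fiber ha (hQ i) hp hx
  refine ⟨fun p hp => ?_, fun p hp q hq hpq x hxp hxq => ?_, fun w => ?_⟩
  · obtain ⟨i, hp⟩ := Set.mem_iUnion.mp hp
    induction p using Sym2.ind with
    | _ x y =>
    exact (hS.adj_iff x y).mpr ⟨fun hxy => (hQ i).not_isDiag _ hp (Sym2.mk_isDiag_iff.mpr hxy),
      i, mem_S hp (Sym2.mem_mk_left x y), mem_S hp (Sym2.mem_mk_right x y)⟩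
  · obtain ⟨i, hp⟩ := Set.mem_iUnion.mp hp
    obtain ⟨j, hq⟩ := Set.mem_iUnion.mp hq
    obtain rfl : i = j := ((hQ i).mem_of_mem hp hxp : a x = i).symm.trans ((hQ j).mem_of_mem hq hxq)
    exact (hQ i).disjoint p hp q hq hpq x hxp hxq
  · obtain ⟨p, hp, hwp⟩ := ((hQ (a w)).mem_iff w).mp rfl
    exact ⟨p, Set.mem_iUnion.mpr ⟨a w, hp⟩, hwp⟩

noncomputable def perfMatchEquiv (hS : H.IsCliquePartition S) :
    {P // IsPerfMatchSet H P} ≃ Σ a : {a : W → ι // ∀ w, w ∈ S (a w)},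
      {Q : ι → Set (Sym2 W) // ∀ i, IsPairing {w | a.1 w = i} (Q i)} where
  toFun P := ⟨⟨hS.cliqueIndex P.2, hS.cliqueIndex_mem P.2⟩,
    fun i => {p ∈ P.1 | ∀ x ∈ p, x ∈ S i}, hS.isPairing_cliqueIndex P.2⟩
  invFun aQ := ⟨⋃ i, aQ.2.1 i, hS.isPerfMatchSet_iUnion aQ.1.2 aQ.2.2⟩
  left_inv P := by
    ext p
    simp only [Set.mem_iUnion, Set.mem_ofPred_eq]
    exact ⟨fun ⟨_, hp, _⟩ => hp,
      fun hp => (hS.exists_forall_mem (P.2.1 hp)).imp fun _ hi => ⟨hp, hi⟩⟩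
  right_inv := by
    rintro ⟨⟨a, ha⟩, Q, hQ⟩
    have hP := hS.isPerfMatchSet_iUnion ha hQ
    have mem_S {i p x} (hp : p ∈ Q i) (hx : x ∈ p) : x ∈ S i :=
      mem_of_mem_pairing_fiber ha (hQ i) hp hx
    refine Sigma.subtype_ext (Subtype.ext (funext fun w => ?_)) (funext fun i => ?_)
    · obtain ⟨p, hp, hwp⟩ := ((hQ (a w)).mem_iff w).mp rfl
      exact (hS.cliqueIndex_eq_iff hP (Set.mem_iUnion.mpr ⟨a w, hp⟩) hwp).mpr fun x => mem_S hp
    · ext p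
      simp only [Set.mem_iUnion, Set.mem_ofPred_eq]
      refine ⟨fun ⟨⟨j, hp⟩, hpS⟩ => ?_, fun hp => ⟨⟨i, hp⟩, fun x => mem_S hp⟩⟩
      obtain rfl := hS.eq_of_forall_mem (hP.1 (Set.mem_iUnion.mpr ⟨j, hp⟩)) hpS fun x => mem_S hp
      exact hp

end IsCliquePartition

variable (G : SimpleGraph V)

def middleStar (v : V) : Set (V ⊕ G.edgeSet) :=
  Sum.elim (fun u => u = v) (fun e => v ∈ (e : Sym2 V))

variable {G} in
@[simp] lemma inl_mem_middleStar {u v : V} : Sum.inl u ∈ G.middleStar v ↔ u = v := Iff.rfl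

variable {G} in
@[simp] lemma inr_mem_middleStar {e : G.edgeSet} {v : V} :
    Sum.inr e ∈ G.middleStar v ↔ v ∈ (e : Sym2 V) := Iff.rfl

theorem isCliquePartition_middleGraph : (middleGraph G).IsCliquePartition G.middleStar := by
  refine ⟨?_, ?_⟩
  · rintro (u | e) (u' | f)
    all_goals simp [middleGraph, eq_comm]
  · rintro (u | e) (u' | f) i j hxy
    · simp_all
    · rintro rfl - rfl -; rfl
    · rintro - rfl - rfl; rfl
    · exact Sym2.eq_of_ne_of_mem_of_mem (fun hef => hxy (congrArg _ (Subtype.ext hef)))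

abbrev Orientation := {σ : G.edgeSet → V // ∀ e : G.edgeSet, σ e ∈ (e : Sym2 V)}

def inDegree [Fintype G.edgeSet] [DecidableEq V] (σ : G.edgeSet → V) (v : V) : ℕ :=
  #((Finset.univ : Finset G.edgeSet).filter fun e => σ e = v)

section Flips

variable {G} [DecidableEq V]

def flips (τ σ : G.Orientation) : G.edgeSet → ZMod 2 := fun e => if σ.1 e = τ.1 e then 0 else 1

lemma ite_eq_add_ite_mem_flips (τ σ : G.Orientation) (e : G.edgeSet) (v : V) :
    (if σ.1 e = v then 1 else 0 : ZMod 2) =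
      (if τ.1 e = v then 1 else 0) + if v ∈ (e : Sym2 V) then flips τ σ e else 0 := by
  by_cases h : σ.1 e = τ.1 e
  · simp [flips, h]
  · have he : (e : Sym2 V) = s(τ.1 e, σ.1 e) := (Sym2.mem_and_mem_iff (Ne.symm h)).mp ⟨τ.2 e, σ.2 e⟩
    rw [he]
    by_cases hτ : τ.1 e = v <;> by_cases hσ : σ.1 e = v <;> simp_all [flips, eq_comm]
    all_goals decide

noncomputable def flipsEquiv (τ : G.Orientation) : G.Orientation ≃ (G.edgeSet → ZMod 2) where
  toFun := flips τ
  invFun x := ⟨fun e => if x e = 0 then τ.1 e else Sym2.Mem.other (τ.2 e), fun e => by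
    dsimp only
    split_ifs
    exacts [τ.2 e, Sym2.other_mem _]⟩
  left_inv σ := by
    ext e
    dsimp only [flips]
    by_cases h : σ.1 e = τ.1 e
    · simp [h]
    · have hσ := σ.2 e
      rw [← Sym2.other_spec (τ.2 e), Sym2.mem_iff] at hσ
      simp only [if_neg h, if_neg one_ne_zero]
      exact (hσ.resolve_left h).symm
  right_inv x := by
    ext e
    dsimp only [flips]
    have hne := Sym2.other_ne (G.not_isDiag_of_mem_edgeSet e.2) (τ.2 e)
    rcases (by decide : ∀ t : ZMod 2, t = 0 ∨ t = 1) (x e) with h | h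
    · simp [h]
    · simp only [h, if_neg one_ne_zero, if_neg hne]

end Flips

section Count

variable [Fintype V] [DecidableEq V] [DecidableRel G.Adj]

def assignmentEquivOrientation :
    {a : V ⊕ G.edgeSet → V // ∀ w, w ∈ G.middleStar (a w)} ≃ G.Orientation where
  toFun a := ⟨a.1 ∘ Sum.inr, fun e => a.2 (Sum.inr e)⟩
  invFun σ := ⟨Sum.elim id σ.1, by rintro (u | e); exacts [rfl, σ.2 e]⟩
  left_inv a := Subtype.ext <| funext <| by rintro (u | e); exacts [a.2 (Sum.inl u), rfl]
  right_inv σ := rfl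

lemma card_filter_sumElim_eq (σ : G.edgeSet → V) (v : V) :
    #(univ.filter fun w => Sum.elim id σ w = v) = G.inDegree σ v + 1 := by
  have hv : (∑ u : V, if Sum.elim id σ (Sum.inl u) = v then 1 else 0) = 1 :=
    Fintype.sum_ite_eq' v fun _ => 1
  rw [inDegree, card_filter, card_filter, Fintype.sum_sum_type, hv, add_comm]
  rfl

theorem pmCount_middleGraph : pmCount (middleGraph G) =
    ∑ σ : G.Orientation, ∏ v, if Odd (G.inDegree σ v) then (G.inDegree σ v)‼ else 0 := by
  classical
  have hS := G.isCliquePartition_middleGraph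
  rw [pmCount, ← Nat.card_coe_set_eq]
  change Nat.card {P // IsPerfMatchSet _ P} = _
  rw [Nat.card_congr hS.perfMatchEquiv, Nat.card_sigma]
  refine (Fintype.sum_equiv G.assignmentEquivOrientation.symm _ _ fun σ => ?_).symm
  rw [Nat.card_congr Equiv.subtypePiEquivPi, Nat.card_pi]
  refine prod_congr rfl fun v _ => ?_
  change _ = Nat.card {Q // IsPairing {w | Sum.elim id σ.1 w = v} Q}
  rw [← coe_filter_univ, card_pairings, card_filter_sumElim_eq]
  simp only [Nat.even_add_one, Nat.not_even_iff_odd, Nat.add_sub_cancel]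

end Count

section Parity

lemma ite_mem_mk_eq_single_add_single [DecidableEq V] {a b : V} (hab : a ≠ b) :
    (fun v => if v ∈ s(a, b) then 1 else 0 : V → ZMod 2) = Pi.single a 1 + Pi.single b 1 := by
  ext v
  by_cases hva : v = a <;> by_cases hvb : v = b <;> simp_all

variable [Fintype V]

variable (V) in
def sumCoords : Module.Dual (ZMod 2) (V → ZMod 2) := ∑ v, LinearMap.proj v

lemma sumCoords_apply (y : V → ZMod 2) : sumCoords V y = ∑ v, y v := by
  simp [sumCoords]

variable [DecidableEq V] [DecidableRel G.Adj]

def incidence : (G.edgeSet → ZMod 2) →ₗ[ZMod 2] (V → ZMod 2) :=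
  Fintype.linearCombination (ZMod 2) fun e v => if v ∈ (e : Sym2 V) then 1 else 0

lemma incidence_apply (x : G.edgeSet → ZMod 2) (v : V) :
    G.incidence x v = ∑ e : G.edgeSet, if v ∈ (e : Sym2 V) then x e else 0 := by
  simp [incidence, Fintype.linearCombination_apply]

variable {G} in
lemma single_add_single_mem_range {u w : V} (h : G.Reachable u w) :
    (Pi.single u 1 + Pi.single w 1 : V → ZMod 2) ∈ LinearMap.range G.incidence := by
  have : Nonempty V := ⟨u⟩
  obtain ⟨p⟩ := h
  induction p with
  | nil => exact (CharTwo.add_self_eq_zero (Pi.single _ 1 : V → ZMod 2)).symm ▸ zero_mem _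
  | @cons u x w hux _ ih =>
    have hcol : (Pi.single u 1 + Pi.single x 1 : V → ZMod 2) ∈ LinearMap.range G.incidence := by
      rw [incidence, Fintype.range_linearCombination,
        ← ite_mem_mk_eq_single_add_single (G.ne_of_adj hux)]
      exact Submodule.subset_span ⟨⟨s(u, x), hux⟩, rfl⟩
    convert add_mem hcol ih using 1
    rw [add_assoc, ← add_assoc (Pi.single x 1), CharTwo.add_self_eq_zero, zero_add]

theorem range_incidence (hconn : G.Connected) :
    LinearMap.range G.incidence = LinearMap.ker (sumCoords V) := by
  obtain ⟨u₀⟩ := hconn.nonempty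
  apply le_antisymm
  · rw [incidence, Fintype.range_linearCombination, Submodule.span_le]
    rintro _ ⟨⟨e, he⟩, rfl⟩
    induction e using Sym2.ind with
    | _ a b =>
    change sumCoords V (fun v => if v ∈ s(a, b) then 1 else 0) = 0
    rw [ite_mem_mk_eq_single_add_single (G.ne_of_adj he), map_add, sumCoords_apply, sumCoords_apply]
    simp [CharTwo.add_self_eq_zero]
  · intro y hy
    have hy' : y = ∑ v, y v • (Pi.single v 1 + Pi.single u₀ 1) := by
      rw [LinearMap.mem_ker, sumCoords_apply] at hy
      simp only [smul_add, sum_add_distrib, ← sum_smul, hy, zero_smul, add_zero]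
      ext w
      simp [Finset.sum_apply, Pi.single_apply]
    rw [hy']
    exact sum_mem fun v _ =>
      Submodule.smul_mem _ _ (single_add_single_mem_range (hconn.preconnected v u₀))

theorem finrank_ker_incidence_add_card (hconn : G.Connected) :
    Module.finrank (ZMod 2) (LinearMap.ker G.incidence) + Fintype.card V =
      Fintype.card G.edgeSet + 1 := by
  obtain ⟨u₀⟩ := hconn.nonempty
  have hsum : sumCoords V ≠ 0 := fun h => by
    simpa [sumCoords_apply] using LinearMap.congr_fun h (Pi.single u₀ 1)
  have h1 := Module.Dual.finrank_ker_add_one_of_ne_zero hsum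
  have h2 := LinearMap.finrank_range_add_finrank_ker G.incidence
  rw [range_incidence G hconn] at h2
  rw [Module.finrank_fintype_fun_eq_card] at h1 h2
  omega

theorem card_incidence_fiber (hconn : G.Connected) {c : V → ZMod 2} (hc : ∑ v, c v = 0) :
    Nat.card {x // G.incidence x = c} = 2 ^ (Fintype.card G.edgeSet + 1 - Fintype.card V) := by
  obtain ⟨x₀, rfl⟩ : c ∈ LinearMap.range G.incidence := by
    rwa [range_incidence G hconn, LinearMap.mem_ker, sumCoords_apply]
  have hker : Nat.card {x // G.incidence x = G.incidence x₀} =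
      Nat.card (LinearMap.ker G.incidence) :=
    Nat.card_congr (G.incidence.toAddMonoidHom.fiberEquivKer x₀)
  rw [hker, Module.natCard_eq_pow_finrank (K := ZMod 2), Nat.card_zmod]
  have := finrank_ker_incidence_add_card G hconn
  congr 1
  omega

variable {G}

lemma sum_inDegree (σ : G.edgeSet → V) : ∑ v, G.inDegree σ v = Fintype.card G.edgeSet :=
  (card_eq_sum_card_fiberwise fun e _ => mem_univ (σ e)).symm

lemma inDegree_cast_eq (τ σ : G.Orientation) (v : V) :
    (G.inDegree σ v : ZMod 2) = G.inDegree τ v + G.incidence (flips τ σ) v := by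
  simp only [inDegree, card_filter, Nat.cast_sum, Nat.cast_ite, Nat.cast_one, Nat.cast_zero,
    incidence_apply, ← sum_add_distrib]
  exact sum_congr rfl fun e _ => ite_eq_add_ite_mem_flips τ σ e v

lemma forall_odd_inDegree_iff (τ σ : G.Orientation) :
    (∀ v, Odd (G.inDegree σ v)) ↔
      G.incidence (flips τ σ) = fun v => 1 + (G.inDegree τ v : ZMod 2) := by
  simp only [funext_iff, ← ZMod.natCast_eq_one_iff_odd, inDegree_cast_eq τ σ, ← CharTwo.sub_eq_add,
    eq_sub_iff_add_eq']

theorem card_odd_orientations (hconn : G.Connected)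
    (hpar : Even (Fintype.card G.edgeSet + Fintype.card V)) :
    Nat.card {σ : G.Orientation // ∀ v, Odd (G.inDegree σ v)} =
      2 ^ (Fintype.card G.edgeSet + 1 - Fintype.card V) := by
  obtain ⟨τ⟩ : Nonempty G.Orientation :=
    ⟨⟨fun e => (e : Sym2 V).out.1, fun e => Sym2.out_fst_mem _⟩⟩
  rw [← card_incidence_fiber G hconn (c := fun v => 1 + (G.inDegree τ v : ZMod 2))]
  · exact Nat.card_congr ((flipsEquiv τ).subtypeEquiv (forall_odd_inDegree_iff τ))
  · rw [sum_add_distrib, ← Nat.cast_sum, sum_inDegree, sum_const, card_univ, nsmul_one,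
      ← Nat.cast_add, add_comm]
    exact (ZMod.natCast_eq_zero_iff_even).mpr hpar

end Parity

section Cubic

variable [Fintype V] [DecidableEq V] [DecidableRel G.Adj]

variable {G} in
lemma inDegree_le_degree (σ : G.Orientation) (v : V) : G.inDegree σ v ≤ G.degree v := by
  rw [← card_incidenceFinset_eq_degree]
  refine card_le_card_of_injOn (fun e => (e : Sym2 V)) (fun e he => ?_)
    fun e _ f _ h => Subtype.ext h
  rw [mem_coe, mem_filter] at he
  exact (mem_incidenceFinset G v e).mpr ⟨e.2, he.2 ▸ σ.2 e⟩

theorem prod_doubleFactorial_of_cubic (hcubic : G.IsRegularOfDegree 3) (σ : G.Orientation) :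
    ∏ v, (if Odd (G.inDegree σ v) then (G.inDegree σ v)‼ else 0) =
      if ∀ v, Odd (G.inDegree σ v) then 3 ^ ((Fintype.card G.edgeSet - Fintype.card V) / 2)
      else 0 := by
  split_ifs with hodd
  · have hle v : G.inDegree σ v ≤ 3 := hcubic v ▸ inDegree_le_degree σ v
    rw [prod_congr rfl fun v _ => by
      rw [if_pos (hodd v), doubleFactorial_eq_three_pow (hodd v) (hle v)], prod_pow_eq_pow_sum]
    have hsum : 2 * ∑ v, G.inDegree σ v / 2 + Fintype.card V = Fintype.card G.edgeSet := by
      rw [← sum_inDegree σ.1,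
        ← sum_congr rfl fun v _ => Nat.two_mul_div_two_add_one_of_odd (hodd v),
        sum_add_distrib, mul_sum, sum_const, card_univ, smul_eq_mul, mul_one]
    congr 1
    omega
  · obtain ⟨v, hv⟩ := not_forall.mp hodd
    exact prod_eq_zero (mem_univ v) (if_neg hv)

theorem pmCount_middleGraph_of_cubic (hcubic : G.IsRegularOfDegree 3) :
    pmCount (middleGraph G) = Nat.card {σ : G.Orientation // ∀ v, Odd (G.inDegree σ v)} *
      3 ^ ((Fintype.card G.edgeSet - Fintype.card V) / 2) := by
  rw [pmCount_middleGraph, sum_congr rfl fun σ _ => prod_doubleFactorial_of_cubic G hcubic σ,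
    sum_ite, sum_const_zero, add_zero, sum_const, smul_eq_mul, Nat.card_eq_fintype_card,
    Fintype.card_subtype fun σ : G.Orientation => ∀ v, Odd (G.inDegree σ v)]

end Cubic

end SimpleGraph

end

theorem middle_graph_pm_cubic_even_general {V : Type*} [Fintype V]
    (G : SimpleGraph V) [DecidableRel G.Adj]
    (hconn : G.Connected) (hcubic : G.IsRegularOfDegree 3)
    (heven : Even G.edgeFinset.card) :
    pmCount (middleGraph G) =
        2 ^ (G.edgeFinset.card - Fintype.card V + 1) *
          3 ^ ((2 * Fintype.card V - G.edgeFinset.card) / 2) ∧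
      pmCount (middleGraph G) =
        2 ^ (Fintype.card V / 2 + 1) * 3 ^ (Fintype.card V / 4) := by
  classical
  have handshake : 2 * Fintype.card G.edgeSet = 3 * Fintype.card V := by
    simpa [hcubic.degree_eq, mul_comm, SimpleGraph.edgeFinset_card] using
      G.sum_degrees_eq_twice_card_edges.symm
  rw [SimpleGraph.edgeFinset_card] at heven ⊢
  obtain ⟨k, hk⟩ := heven
  have hpar : Even (Fintype.card G.edgeSet + Fintype.card V) := ⟨k + Fintype.card V / 2, by omega⟩
  rw [G.pmCount_middleGraph_of_cubic hcubic, SimpleGraph.card_odd_orientations hconn hpar]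
  constructor <;> congr 2 <;> omega

/-- If `G` is a connected cubic graph with `n` vertices and `m = 3n/2`
edges, `m` even, then `p(M(G)) = 2^(m-n+1) · 3^((2n-m)/2) = 2^(n/2+1) · 3^(n/4)`. -/
theorem middle_graph_pm_cubic_even {V : Type*} [Fintype V] [DecidableEq V]
    (G : SimpleGraph V) [DecidableRel G.Adj]
    (hconn : G.Connected) (hcubic : G.IsRegularOfDegree 3)
    (heven : Even G.edgeFinset.card) :
    pmCount (middleGraph G) =
        2 ^ (G.edgeFinset.card - Fintype.card V + 1) *
          3 ^ ((2 * Fintype.card V - G.edgeFinset.card) / 2) ∧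
      pmCount (middleGraph G) =
        2 ^ (Fintype.card V / 2 + 1) * 3 ^ (Fintype.card V / 4) :=
  middle_graph_pm_cubic_even_general G hconn hcubic heven
end

section
/- Let G be a connected cubic (3-regular) simple graph with n vertices and m = 3n/2 edges, where m is odd, and let e be an edge of G that is not a cut edge (i.e., G - e is connected). Then the number of perfect matchings of the vertex-edge graph M(G - e) equals 2^(m-n) · 3^((2n-m-1)/2) = 2^(n/2) · 3^((n-2)/4). -/
variable {V : Type*}

/-!
In a perfect matching of `M(H)`, every edge `e` of `H` is matched either with an endpoint of `e`
or with an edge meeting `e` in a vertex; call that vertex of `H` the head of `e`. Each vertex `v`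
is matched with one edge headed at `v` and the other edges headed at `v` are matched among
themselves, so the orientation towards the heads has odd in-degrees. When all degrees are at most
`3` this is reversible: an odd orientation together with a choice of one in-edge at every vertex
determines exactly one perfect matching. Since all in-degrees are then `1` or `3`, each odd
orientation contributes `∏ indeg v = 3 ^ ((|E| - |V|) / 2)` matchings.

Over `𝔽₂`, flipping the edges of `x ∈ 𝔽₂^E` changes the in-degree parities by the boundary `∂x`,
and for connected `H` the image of `∂` consists of the vectors with even sum. So when `|E| + |V|`
is even the odd orientations form a coset of `ker ∂`: there are `2 ^ (|E| - |V| + 1)` of them.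
For `H = G - e` with `G` cubic, `|E| = 3|V|/2 - 1`.
-/

open Finset

theorem Sym2.mk_out {α : Type*} (z : Sym2 α) : s(z.out.1, z.out.2) = z :=
  Quot.out_eq z

theorem Sym2.mem_iff_eq_out {α : Type*} {a : α} {z : Sym2 α} :
    a ∈ z ↔ a = z.out.1 ∨ a = z.out.2 := by
  conv_lhs => rw [← z.mk_out]
  exact Sym2.mem_iff

theorem Sym2.out_fst_ne_out_snd {α : Type*} {z : Sym2 α} (hz : ¬z.IsDiag) : z.out.1 ≠ z.out.2 :=
  fun h => hz (z.mk_out ▸ Sym2.mk_isDiag_iff.mpr h)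

theorem Finset.exists_mem_ne_ne_iff {α : Type*} [DecidableEq α] {s : Finset α} {x y : α}
    (hx : x ∈ s) (hy : y ∈ s) (hxy : x ≠ y) : (∃ z ∈ s, z ≠ x ∧ z ≠ y) ↔ 2 < #s := by
  refine ⟨fun ⟨z, hz, hzx, hzy⟩ => two_lt_card_iff.mpr ⟨x, y, z, hx, hy, hz, hxy, hzx.symm,
    hzy.symm⟩, fun hs => ?_⟩
  have hpos : 0 < #((s.erase x).erase y) := by
    rw [card_erase_of_mem (mem_erase.mpr ⟨hxy.symm, hy⟩), card_erase_of_mem hx]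
    omega
  obtain ⟨z, hz⟩ := card_pos.mp hpos
  obtain ⟨hzy, hzx, hzs⟩ := by simpa only [mem_erase] using hz
  exact ⟨z, hzs, hzx, hzy⟩

section PerfectMatching

variable {W : Type*} {M : SimpleGraph W} {P : Set (Sym2 W)}

theorem isPerfMatchSet_iff_existsUnique :
    IsPerfMatchSet M P ↔ P ⊆ M.edgeSet ∧ ∀ a, ∃! b, s(a, b) ∈ P := by
  refine ⟨fun ⟨hsub, hdisj, hcov⟩ => ⟨hsub, fun a => ?_⟩, fun ⟨hsub, huniq⟩ => ⟨hsub, ?_, ?_⟩⟩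
  · obtain ⟨p, hp, hap⟩ := hcov a
    obtain ⟨b, rfl⟩ := Sym2.mem_iff_exists.mp hap
    refine ⟨b, hp, fun c hc => ?_⟩
    by_contra hcb
    exact hdisj _ hc _ hp (mt Sym2.congr_right.mp hcb) a (Sym2.mem_mk_left _ _)
      (Sym2.mem_mk_left _ _)
  · intro p hp q hq hpq a hap haq
    obtain ⟨b, rfl⟩ := Sym2.mem_iff_exists.mp hap
    obtain ⟨c, rfl⟩ := Sym2.mem_iff_exists.mp haq
    exact hpq (by rw [(huniq a).unique hp hq])
  · intro a
    obtain ⟨b, hb, -⟩ := huniq a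
    exact ⟨_, hb, Sym2.mem_mk_left _ _⟩

theorem isPerfMatchSet_fromRel_iff {r : W → W → Prop} (hr : Std.Symm r) :
    IsPerfMatchSet M (Sym2.fromRel hr) ↔ r ≤ M.Adj ∧ ∀ a, ∃! b, r a b := by
  rw [isPerfMatchSet_iff_existsUnique]
  refine and_congr ⟨fun h a b hab => h (Sym2.fromRel_prop.mpr hab), fun h z hz => ?_⟩ Iff.rfl
  induction z using Sym2.ind
  exact h _ _ hz

theorem IsPerfMatchSet.eq_fromRel (hP : IsPerfMatchSet M P) {r : W → W → Prop}
    (hr : Std.Symm r) (hle : ∀ a b, s(a, b) ∈ P → r a b)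
    (huniq : ∀ a b c, r a b → r a c → b = c) : P = Sym2.fromRel hr := by
  ext z
  induction z using Sym2.ind with | _ a b => ?_
  refine ⟨hle a b, fun hab => ?_⟩
  obtain ⟨c, hc, -⟩ := (isPerfMatchSet_iff_existsUnique.mp hP).2 a
  rwa [huniq a b c hab (hle a c hc)]

end PerfectMatching

section MiddleGraph

variable (H : SimpleGraph V)

def ends : V ⊕ H.edgeSet → Set V :=
  Sum.elim (fun v => {v}) fun e => {w | w ∈ (e : Sym2 V)}

variable {H}

theorem middleGraph_adj_iff {a b : V ⊕ H.edgeSet} :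
    (middleGraph H).Adj a b ↔ a ≠ b ∧ ∃ w, w ∈ ends H a ∧ w ∈ ends H b := by
  rcases a with u | e <;> rcases b with v | f <;>
    simp [middleGraph, ends]

theorem eq_of_mem_ends_of_adj {a b : V ⊕ H.edgeSet} (hab : (middleGraph H).Adj a b) {w w' : V}
    (hwa : w ∈ ends H a) (hwb : w ∈ ends H b) (hwa' : w' ∈ ends H a) (hwb' : w' ∈ ends H b) :
    w = w' := by
  rcases a with u | e <;> rcases b with v | f
  · exact hab.elim
  · exact hwa.trans hwa'.symm
  · exact hwb.trans hwb'.symm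
  · by_contra hne
    exact hab.1 (Subtype.ext (Sym2.eq_of_ne_mem hne hwa hwa' hwb hwb'))

end MiddleGraph

section InDegree

variable [DecidableEq V] {E : Type*} [Fintype E]

def inDegree (h : E → V) (v : V) : ℕ := #{e | h e = v}

theorem sum_inDegree [Fintype V] (h : E → V) : ∑ v, inDegree h v = Fintype.card E := by
  rw [← card_univ, card_eq_sum_card_fiberwise fun e _ => mem_univ (h e)]
  rfl

theorem prod_inDegree [Fintype V] {h : E → V} (hdeg : ∀ v, inDegree h v = 1 ∨ inDegree h v = 3) :
    ∏ v, inDegree h v = 3 ^ ((Fintype.card E - Fintype.card V) / 2) := by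
  have hpow : ∀ v, inDegree h v = 3 ^ ((inDegree h v - 1) / 2) := fun v => by
    rcases hdeg v with hv | hv <;> simp [hv]
  have htwice : ∑ v, inDegree h v = ∑ v, (2 * ((inDegree h v - 1) / 2) + 1) :=
    sum_congr rfl fun v _ => by rcases hdeg v with hv | hv <;> rw [hv]
  rw [prod_congr rfl fun v _ => hpow v, prod_pow_eq_pow_sum]
  rw [sum_inDegree, sum_add_distrib, ← mul_sum, sum_const, card_univ, smul_eq_mul, mul_one]
    at htwice
  rw [htwice]
  congr 1
  omega

variable {H : SimpleGraph V}

def IsOrientation (h : H.edgeSet → V) : Prop := ∀ e : H.edgeSet, h e ∈ (e : Sym2 V)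

variable [Fintype V] [DecidableRel H.Adj]

def IsOddOrientation (h : H.edgeSet → V) : Prop :=
  IsOrientation h ∧ ∀ v, Odd (inDegree h v)

instance : DecidablePred (IsOddOrientation (H := H)) := fun _ => by
  unfold IsOddOrientation IsOrientation
  infer_instance

theorem inDegree_le_degree {h : H.edgeSet → V} (hh : IsOrientation h) (v : V) :
    inDegree h v ≤ H.degree v := by
  rw [← H.card_incidenceFinset_eq_degree, inDegree]
  refine card_le_card_of_injOn (fun e => (e : Sym2 V)) (fun e he => ?_) Subtype.val_injective.injOn
  simp only [coe_filter, mem_univ, true_and, Set.mem_ofPred_eq, mem_coe,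
    SimpleGraph.mem_incidenceFinset] at he ⊢
  exact ⟨e.2, he ▸ hh e⟩

theorem inDegree_le_maxDegree {h : H.edgeSet → V} (hh : IsOrientation h) (v : V) :
    inDegree h v ≤ H.maxDegree :=
  (inDegree_le_degree hh v).trans (H.degree_le_maxDegree v)

end InDegree

theorem ite_mem_mk_eq_single_add_single {R : Type*} [AddMonoidWithOne R] [DecidableEq V]
    {u w : V} (huw : u ≠ w) :
    (fun v => if v ∈ s(u, w) then (1 : R) else 0) = Pi.single u 1 + Pi.single w 1 := by
  funext v
  by_cases hu : v = u <;> by_cases hw : v = w <;> simp_all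

section Boundary

variable [Fintype V]

variable (R : Type*) [Semiring R] in
def coordSum : (V → R) →ₗ[R] R :=
  Fintype.linearCombination R fun _ => 1

theorem coordSum_apply {R : Type*} [Semiring R] (y : V → R) : coordSum R y = ∑ v, y v := by
  simp [coordSum, Fintype.linearCombination_apply]

variable [DecidableEq V] (H : SimpleGraph V) [DecidableRel H.Adj]

def boundary : (H.edgeSet → ZMod 2) →ₗ[ZMod 2] V → ZMod 2 :=
  Fintype.linearCombination (ZMod 2) fun e v => if v ∈ (e : Sym2 V) then 1 else 0

theorem single_add_single_mem_range_boundary {u w : V} (huw : H.Reachable u w) :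
    Pi.single u 1 + Pi.single w 1 ∈ LinearMap.range (boundary H) := by
  obtain ⟨p⟩ := huw
  induction p with
  | nil => exact ⟨0, by rw [map_zero, ZModModule.add_self]⟩
  | @cons u b w hadj p ih =>
    have hedge : Pi.single u 1 + Pi.single b 1 ∈ LinearMap.range (boundary H) := by
      rw [boundary, Fintype.range_linearCombination, ← ite_mem_mk_eq_single_add_single hadj.ne]
      exact Submodule.subset_span ⟨⟨s(u, b), hadj⟩, rfl⟩
    convert add_mem hedge ih using 1
    rw [add_assoc, ← add_assoc (Pi.single b 1), ZModModule.add_self, zero_add]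

theorem range_boundary (hH : H.Connected) :
    LinearMap.range (boundary H) = LinearMap.ker (coordSum (ZMod 2)) := by
  apply le_antisymm
  · rw [boundary, Fintype.range_linearCombination, Submodule.span_le]
    rintro _ ⟨⟨e, he⟩, rfl⟩
    induction e using Sym2.ind with | _ u w => ?_
    change coordSum (ZMod 2) (fun v => if v ∈ s(u, w) then (1 : ZMod 2) else 0) = 0
    rw [ite_mem_mk_eq_single_add_single (H.ne_of_adj he), map_add, coordSum_apply, coordSum_apply]
    simp [ZModModule.add_self]
  · intro y hy
    obtain ⟨r⟩ := hH.nonempty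
    have hy' : y = ∑ v, y v • (Pi.single v 1 + Pi.single r 1) := by
      rw [LinearMap.mem_ker, coordSum_apply] at hy
      simp only [smul_add, sum_add_distrib, ← sum_smul, hy, zero_smul, add_zero]
      ext x
      simp [Finset.sum_apply, Pi.single_apply]
    rw [hy']
    exact sum_mem fun v _ => Submodule.smul_mem _ _
      (single_add_single_mem_range_boundary H (hH.preconnected v r))

theorem finrank_ker_boundary (hH : H.Connected) :
    Module.finrank (ZMod 2) (LinearMap.ker (boundary H)) =
      Fintype.card H.edgeSet + 1 - Fintype.card V := by
  obtain ⟨r⟩ := hH.nonempty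
  have hsurj : Function.Surjective (coordSum (ZMod 2) (V := V)) := fun c =>
    ⟨Pi.single r c, by simp [coordSum_apply]⟩
  have hV := LinearMap.finrank_range_add_finrank_ker (coordSum (ZMod 2) (V := V))
  have hE := LinearMap.finrank_range_add_finrank_ker (boundary H)
  rw [LinearMap.range_eq_top.mpr hsurj, finrank_top, Module.finrank_self,
    Module.finrank_fintype_fun_eq_card] at hV
  rw [range_boundary H hH, Module.finrank_fintype_fun_eq_card] at hE
  omega

theorem card_boundary_fiber (hH : H.Connected) {c : V → ZMod 2} (hc : coordSum (ZMod 2) c = 0) :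
    Nat.card {x // boundary H x = c} = 2 ^ (Fintype.card H.edgeSet + 1 - Fintype.card V) := by
  obtain ⟨x₀, rfl⟩ : c ∈ LinearMap.range (boundary H) := range_boundary H hH ▸ hc
  calc Nat.card {x // boundary H x = boundary H x₀}
      = Nat.card (boundary H).toAddMonoidHom.ker :=
        Nat.card_congr ((boundary H).toAddMonoidHom.fiberEquivKer x₀)
    _ = Nat.card (LinearMap.ker (boundary H)) := rfl
    _ = 2 ^ (Fintype.card H.edgeSet + 1 - Fintype.card V) := by
      rw [Module.natCard_eq_pow_finrank (K := ZMod 2), Nat.card_zmod, finrank_ker_boundary H hH]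

end Boundary

section OddOrientation

variable [Fintype V] [DecidableEq V] {H : SimpleGraph V} [DecidableRel H.Adj]

noncomputable def orientationEquiv :
    {h : H.edgeSet → V // IsOrientation h} ≃ (H.edgeSet → ZMod 2) where
  toFun h e := if h.1 e = (e : Sym2 V).out.1 then 0 else 1
  invFun x := ⟨fun e => if x e = 0 then (e : Sym2 V).out.1 else (e : Sym2 V).out.2,
    fun e => by dsimp only; split_ifs; exacts [Sym2.out_fst_mem _, Sym2.out_snd_mem _]⟩
  left_inv h := Subtype.ext <| funext fun e => by
    have hne := Sym2.out_fst_ne_out_snd (H.not_isDiag_of_mem_edgeSet e.2)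
    rcases Sym2.mem_iff_eq_out.mp (h.2 e) with he | he <;> simp [he, hne.symm]
  right_inv x := funext fun e => by
    have hne := Sym2.out_fst_ne_out_snd (H.not_isDiag_of_mem_edgeSet e.2)
    rcases (by decide : ∀ z : ZMod 2, z = 0 ∨ z = 1) (x e) with hx | hx <;> simp [hx, hne.symm]

theorem natCast_inDegree_eq (h : {h : H.edgeSet → V // IsOrientation h}) (v : V) :
    (inDegree h.1 v : ZMod 2) =
      inDegree (fun e : H.edgeSet => (e : Sym2 V).out.1) v + boundary H (orientationEquiv h) v := by
  simp only [inDegree, natCast_card_filter, boundary, Fintype.linearCombination_apply,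
    Finset.sum_apply, Pi.smul_apply, smul_eq_mul, ← sum_add_distrib]
  refine sum_congr rfl fun e _ => ?_
  have hne := Sym2.out_fst_ne_out_snd (H.not_isDiag_of_mem_edgeSet e.2)
  simp only [orientationEquiv, Equiv.coe_fn_mk]
  have h11 : (1 : ZMod 2) + 1 = 0 := rfl
  rcases Sym2.mem_iff_eq_out.mp (h.2 e) with he | he <;> rw [he]
  · simp
  · by_cases hv : v ∈ (e : Sym2 V)
    · rcases Sym2.mem_iff_eq_out.mp hv with rfl | rfl <;> simp [hne, hne.symm, hv, h11]
    · have h1 : (e : Sym2 V).out.1 ≠ v := fun h1 => hv (h1 ▸ Sym2.out_fst_mem _)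
      have h2 : (e : Sym2 V).out.2 ≠ v := fun h2 => hv (h2 ▸ Sym2.out_snd_mem _)
      simp [h1, h2, hv]

theorem card_oddOrientation (hH : H.Connected)
    (hpar : Even (Fintype.card H.edgeSet + Fintype.card V)) :
    Nat.card {h : H.edgeSet → V // IsOddOrientation h} =
      2 ^ (Fintype.card H.edgeSet + 1 - Fintype.card V) := by
  -- `h` is odd iff `boundary H (orientationEquiv h)` is this vector, whose sum is `|V| + |E|`
  have hc : coordSum (ZMod 2)
      (fun v => 1 + (inDegree (fun e : H.edgeSet => (e : Sym2 V).out.1) v : ZMod 2)) = 0 := by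
    rw [coordSum_apply, sum_add_distrib, ← Nat.cast_sum, sum_inDegree, sum_const, card_univ,
      nsmul_one, ← Nat.cast_add, ZMod.natCast_eq_zero_iff_even, add_comm]
    exact hpar
  rw [← card_boundary_fiber H hH hc]
  refine Nat.card_congr ((Equiv.subtypeSubtypeEquivSubtypeInter _ _).symm.trans
    (orientationEquiv.subtypeEquiv fun h => ?_))
  simp only [funext_iff]
  refine forall_congr' fun v => ?_
  rw [← ZMod.natCast_eq_one_iff_odd, natCast_inDegree_eq]
  generalize (inDegree (fun e : H.edgeSet => (e : Sym2 V).out.1) v : ZMod 2) = a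
  generalize boundary H (orientationEquiv h) v = b
  revert a b
  decide

end OddOrientation

section MiddleGraphMatching

variable {H : SimpleGraph V} {h : H.edgeSet → V} {g : V → H.edgeSet}

/-- Read `h` as an orientation and `g v` as a chosen in-edge at `v`: then `v` is matched with
`g v`, and the other in-edges at a vertex are matched with each other. -/
def MatchRel (h : H.edgeSet → V) (g : V → H.edgeSet) : V ⊕ H.edgeSet → V ⊕ H.edgeSet → Prop
  | .inl _, .inl _ => False
  | .inl v, .inr e => g v = e
  | .inr e, .inl v => g v = e
  | .inr e, .inr f => e ≠ f ∧ h e = h f ∧ g (h e) ≠ e ∧ g (h e) ≠ f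

theorem matchRel_symm (h : H.edgeSet → V) (g : V → H.edgeSet) : Std.Symm (MatchRel h g) := by
  constructor
  rintro (v | e) (w | f) hab
  · exact hab
  · exact hab
  · exact hab
  · obtain ⟨hef, hhef, hge, hgf⟩ := hab
    exact ⟨hef.symm, hhef.symm, hhef ▸ hgf, hhef ▸ hge⟩

def matchSet (h : H.edgeSet → V) (g : V → H.edgeSet) : Set (Sym2 (V ⊕ H.edgeSet)) :=
  Sym2.fromRel (matchRel_symm h g)

theorem mem_of_matchRel_inl {v : V} {e : H.edgeSet} (hh : IsOrientation h)
    (hg : ∀ v, h (g v) = v) (hve : MatchRel h g (.inl v) (.inr e)) :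
    v ∈ (e : Sym2 V) := by
  have := hh (g v)
  rwa [hg v, show g v = e from hve] at this

theorem matchRel_le_adj (hh : IsOrientation h) (hg : ∀ v, h (g v) = v) :
    MatchRel h g ≤ (middleGraph H).Adj := by
  rintro (v | e) (w | f) hab
  · exact hab.elim
  · exact mem_of_matchRel_inl hh hg hab
  · exact mem_of_matchRel_inl hh hg ((matchRel_symm h g).symm _ _ hab)
  · exact ⟨hab.1, h e, hh e, hab.2.1 ▸ hh f⟩

theorem mem_ends_of_matchRel (hh : IsOrientation h) (hg : ∀ v, h (g v) = v)
    {e : H.edgeSet} {b : V ⊕ H.edgeSet} (hb : MatchRel h g (.inr e) b) : h e ∈ ends H b := by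
  rcases b with w | f
  · exact (hb ▸ hg w : h e = w)
  · exact hb.2.1 ▸ hh f

theorem exists_matchRel_inr_iff (hg : ∀ v, h (g v) = v) (e : H.edgeSet) :
    (∃ b, MatchRel h g (.inr e) b) ↔ (g (h e) ≠ e → ∃ f, h f = h e ∧ f ≠ g (h e) ∧ f ≠ e) := by
  constructor
  · rintro ⟨w | f, hb⟩ hge
    · exact (hge (by rw [← show g w = e from hb, hg])).elim
    · exact ⟨f, hb.2.1.symm, hb.2.2.2.symm, hb.1.symm⟩
  · intro hthird
    by_cases hge : g (h e) = e
    · exact ⟨.inl (h e), hge⟩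
    · obtain ⟨f, hf, hfg, hfe⟩ := hthird hge
      exact ⟨.inr f, hfe.symm, hf.symm, hge, hfg.symm⟩

theorem eq_of_matchSet_eq {h' : H.edgeSet → V} {g' : V → H.edgeSet}
    (hh : IsOrientation h) (hg : ∀ v, h (g v) = v)
    (hh' : IsOrientation h') (hg' : ∀ v, h' (g' v) = v)
    (hex : ∀ a, ∃ b, MatchRel h g a b) (heq : matchSet h g = matchSet h' g') :
    h = h' ∧ g = g' := by
  have hR : ∀ a b, MatchRel h g a b ↔ MatchRel h' g' a b := fun a b =>
    Set.ext_iff.mp heq s(a, b)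
  refine ⟨funext fun e => ?_, funext fun v => ((hR (.inl v) (.inr (g v))).mp rfl).symm⟩
  obtain ⟨b, hb⟩ := hex (.inr e)
  exact eq_of_mem_ends_of_adj (matchRel_le_adj hh hg _ _ hb) (hh e)
    (mem_ends_of_matchRel hh hg hb) (hh' e) (mem_ends_of_matchRel hh' hg' ((hR _ _).mp hb))

variable [Fintype V] [DecidableEq V] [DecidableRel H.Adj]

theorem matchRel_unique (hh : IsOrientation h) (hg : ∀ v, h (g v) = v)
    (hdeg : H.maxDegree ≤ 3) {a b c : V ⊕ H.edgeSet} (hb : MatchRel h g a b)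
    (hc : MatchRel h g a c) : b = c := by
  rcases a with v | e <;> rcases b with w | f <;> rcases c with w' | f'
  · exact (hb : False).elim
  · exact (hb : False).elim
  · exact (hc : False).elim
  · exact congrArg Sum.inr ((hb : g v = f).symm.trans hc)
  · rw [← hg w, ← hg w', show g w = e from hb, show g w' = e from hc]
  · exact (hc.2.2.1 (by rw [← show g w = e from hb, hg])).elim
  · exact (hb.2.2.1 (by rw [← show g w' = e from hc, hg])).elim
  · obtain ⟨hef, hhef, hge, hgf⟩ := hb
    obtain ⟨hef', hhef', -, hgf'⟩ := hc
    by_contra hff'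
    set s : Finset H.edgeSet := {x | h x = h e}
    have hmem : ∀ x, h x = h e → g (h e) ≠ x → x ∈ s.erase (g (h e)) :=
      fun x hx hgx => mem_erase.mpr ⟨hgx.symm, mem_filter.mpr ⟨mem_univ _, hx⟩⟩
    have h3 := (exists_mem_ne_ne_iff (hmem e rfl hge) (hmem f hhef.symm hgf) hef).mp
      ⟨f', hmem f' hhef'.symm hgf', fun hfe => hef' hfe.symm,
        fun hff => hff' (congrArg Sum.inr hff.symm)⟩
    rw [card_erase_of_mem (show g (h e) ∈ s from mem_filter.mpr ⟨mem_univ _, hg (h e)⟩)] at h3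
    have : #s ≤ 3 := (inDegree_le_maxDegree hh (h e)).trans hdeg
    omega

theorem odd_inDegree_iff (hh : IsOrientation h) (hg : ∀ v, h (g v) = v)
    (hdeg : H.maxDegree ≤ 3) (v : V) :
    Odd (inDegree h v) ↔ ∀ e, h e = v → g v ≠ e → ∃ f, h f = v ∧ f ≠ g v ∧ f ≠ e := by
  set s : Finset H.edgeSet := {x | h x = v}
  have hs : ∀ x, x ∈ s ↔ h x = v := fun x => by simp [s]
  have hgs : g v ∈ s := (hs _).mpr (hg v)
  have hle : #s ≤ 3 := (inDegree_le_maxDegree hh v).trans hdeg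
  have hpos : 0 < #s := card_pos.mpr ⟨_, hgs⟩
  have key : ∀ e, h e = v → g v ≠ e → ((∃ f, h f = v ∧ f ≠ g v ∧ f ≠ e) ↔ 2 < #s) :=
    fun e he hne => by
      simp only [← hs, ← exists_mem_ne_ne_iff hgs ((hs e).mpr he) hne]
  change Odd #s ↔ _
  rw [Nat.odd_iff]
  constructor
  · intro hodd e he hne
    have : 1 < #s := one_lt_card.mpr ⟨g v, hgs, e, (hs e).mpr he, hne⟩
    exact (key e he hne).mpr (by omega)
  · intro hthird
    by_contra heven
    obtain ⟨e, he, hne⟩ := exists_mem_ne (by omega : 1 < #s) (g v)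
    have := (key e ((hs e).mp he) hne.symm).mp (hthird e ((hs e).mp he) hne.symm)
    omega

theorem forall_exists_matchRel_iff (hh : IsOrientation h) (hg : ∀ v, h (g v) = v)
    (hdeg : H.maxDegree ≤ 3) :
    (∀ a, ∃ b, MatchRel h g a b) ↔ ∀ v, Odd (inDegree h v) := by
  have hinl : ∀ v, ∃ b, MatchRel h g (.inl v) b := fun v => ⟨.inr (g v), rfl⟩
  simp only [Sum.forall, hinl, implies_true, true_and, exists_matchRel_inr_iff hg,
    odd_inDegree_iff hh hg hdeg]
  exact ⟨fun H v e hev => hev ▸ H e, fun H e => H (h e) e rfl⟩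

theorem isPerfMatchSet_matchSet_iff (hh : IsOrientation h) (hg : ∀ v, h (g v) = v)
    (hdeg : H.maxDegree ≤ 3) :
    IsPerfMatchSet (middleGraph H) (matchSet h g) ↔ ∀ v, Odd (inDegree h v) := by
  rw [matchSet, isPerfMatchSet_fromRel_iff, ← forall_exists_matchRel_iff hh hg hdeg]
  refine ⟨fun hP a => (hP.2 a).exists, fun hex => ⟨matchRel_le_adj hh hg, fun a => ?_⟩⟩
  obtain ⟨b, hb⟩ := hex a
  exact ⟨b, hb, fun c hc => matchRel_unique hh hg hdeg hc hb⟩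

theorem exists_matchSet_eq (hdeg : H.maxDegree ≤ 3) {P : Set (Sym2 (V ⊕ H.edgeSet))}
    (hP : IsPerfMatchSet (middleGraph H) P) :
    ∃ (h : H.edgeSet → V) (g : V → H.edgeSet), IsOrientation h ∧ (∀ v, h (g v) = v) ∧
      P = matchSet h g := by
  obtain ⟨hsub, hpartner⟩ := isPerfMatchSet_iff_existsUnique.mp hP
  choose π hπ hπ_unique using hpartner
  have hadj : ∀ a, (middleGraph H).Adj a (π a) := fun a => hsub (hπ a)
  have hππ : ∀ {a b}, π a = b → π b = a := fun {a b} hab =>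
    (hπ_unique b a (show s(b, a) ∈ P by rw [Sym2.eq_swap, ← hab]; exact hπ a)).symm
  have hinl : ∀ v, ∃ e, π (.inl v) = .inr e := fun v => by
    rcases hv : π (.inl v) with w | e
    · exact ((hv ▸ hadj (.inl v) : (middleGraph H).Adj (.inl v) (.inl w))).elim
    · exact ⟨e, rfl⟩
  choose g hg using hinl
  -- the head of `e` is the vertex of `H` at which `e` meets its partner
  choose h hh using fun e : H.edgeSet => (middleGraph_adj_iff.mp (hadj (.inr e))).2
  have hhg : ∀ v, h (g v) = v := fun v => by
    simpa [hππ (hg v), ends] using (hh (g v)).2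
  have hmatch : ∀ a, MatchRel h g a (π a) := by
    rintro (v | e)
    · rw [hg v]; rfl
    · rcases hb : π (.inr e) with w | f
      · exact Sum.inr.inj ((hg w).symm.trans (hππ hb))
      · have hef : (middleGraph H).Adj (.inr e) (.inr f) := hb ▸ hadj (.inr e)
        have hf : π (.inr f) = .inr e := hππ hb
        have hhef : h e = h f := eq_of_mem_ends_of_adj hef (hh e).1 (hb ▸ (hh e).2)
          (hf ▸ (hh f).2) (hh f).1
        refine ⟨hef.1, hhef, fun hge => ?_, fun hgf => ?_⟩
        · have := hππ ((hg (h e)).trans (congrArg _ hge))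
          rw [hb] at this
          exact Sum.inr_ne_inl this
        · have := hππ ((hg (h e)).trans (congrArg _ hgf))
          rw [hf] at this
          exact Sum.inr_ne_inl this
  have horient : IsOrientation h := fun e => (hh e).1
  refine ⟨h, g, horient, hhg, hP.eq_fromRel _ (fun a b hab => ?_)
    fun _ _ _ => matchRel_unique horient hhg hdeg⟩
  rw [hπ_unique a b hab]
  exact hmatch a

variable (H)

def encodeMatching (hdeg : H.maxDegree ≤ 3) :
    (Σ h : {h : H.edgeSet → V // IsOddOrientation h}, ∀ v, {e // h.1 e = v}) →
      {P // IsPerfMatchSet (middleGraph H) P} :=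
  fun x => ⟨matchSet x.1.1 fun v => x.2 v,
    (isPerfMatchSet_matchSet_iff x.1.2.1 (fun v => (x.2 v).2) hdeg).mpr x.1.2.2⟩

theorem encodeMatching_bijective (hdeg : H.maxDegree ≤ 3) :
    Function.Bijective (encodeMatching H hdeg) := by
  constructor
  · rintro ⟨⟨h, hh, hodd⟩, g⟩ ⟨⟨h', hh', _⟩, g'⟩ henc
    obtain ⟨rfl, hgg⟩ := eq_of_matchSet_eq hh (fun v => (g v).2) hh' (fun v => (g' v).2)
      ((forall_exists_matchRel_iff hh (fun v => (g v).2) hdeg).mpr hodd)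
      (congrArg Subtype.val henc)
    obtain rfl : g = g' := funext fun v => Subtype.ext (congrFun hgg v)
    rfl
  · rintro ⟨P, hP⟩
    obtain ⟨h, g, hh, hg, rfl⟩ := exists_matchSet_eq hdeg hP
    exact ⟨⟨⟨h, hh, (isPerfMatchSet_matchSet_iff hh hg hdeg).mp hP⟩, fun v => ⟨g v, hg v⟩⟩, rfl⟩

theorem pmCount_middleGraph_eq_sum (hdeg : H.maxDegree ≤ 3) :
    pmCount (middleGraph H) =
      ∑ h : {h : H.edgeSet → V // IsOddOrientation h}, ∏ v, inDegree h.1 v := by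
  rw [pmCount, ← Nat.card_coe_set_eq]
  change Nat.card {P // IsPerfMatchSet (middleGraph H) P} = _
  rw [← Nat.card_congr (Equiv.ofBijective _ (encodeMatching_bijective H hdeg)), Nat.card_sigma]
  refine sum_congr rfl fun h _ => ?_
  rw [Nat.card_pi]
  refine prod_congr rfl fun v _ => ?_
  rw [Nat.card_eq_fintype_card, Fintype.card_subtype]
  rfl

theorem pmCount_middleGraph (hH : H.Connected) (hdeg : H.maxDegree ≤ 3)
    (hpar : Even (Fintype.card H.edgeSet + Fintype.card V)) :
    pmCount (middleGraph H) = 2 ^ (Fintype.card H.edgeSet + 1 - Fintype.card V) *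
      3 ^ ((Fintype.card H.edgeSet - Fintype.card V) / 2) := by
  have hprod (h : {h : H.edgeSet → V // IsOddOrientation h}) :
      ∏ v, inDegree h.1 v = 3 ^ ((Fintype.card H.edgeSet - Fintype.card V) / 2) :=
    prod_inDegree fun v => by
      have := (inDegree_le_maxDegree h.2.1 v).trans hdeg
      obtain ⟨k, hk⟩ := h.2.2 v
      omega
  rw [pmCount_middleGraph_eq_sum H hdeg, sum_congr rfl fun h _ => hprod h, sum_const, card_univ,
    smul_eq_mul, ← Nat.card_eq_fintype_card, card_oddOrientation hH hpar]

end MiddleGraphMatching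

theorem middle_graph_pm_cubic_odd_noncut_general {V : Type*} [Fintype V]
    (G : SimpleGraph V) [DecidableRel G.Adj]
    (hcubic : G.IsRegularOfDegree 3)
    (hodd : Odd G.edgeFinset.card)
    (e : Sym2 V) (he : e ∈ G.edgeSet) (hnc : (G.deleteEdges {e}).Connected) :
    pmCount (middleGraph (G.deleteEdges {e})) =
        2 ^ (G.edgeFinset.card - Fintype.card V) *
          3 ^ ((2 * Fintype.card V - G.edgeFinset.card - 1) / 2) ∧
      pmCount (middleGraph (G.deleteEdges {e})) =
        2 ^ (Fintype.card V / 2) * 3 ^ ((Fintype.card V - 2) / 4) := by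
  classical
  have hsum := G.sum_degrees_eq_twice_card_edges
  simp only [hcubic.degree_eq, sum_const, card_univ, smul_eq_mul] at hsum
  have hcard : Fintype.card (G.deleteEdges {e}).edgeSet = #G.edgeFinset - 1 := by
    rw [← Nat.card_eq_fintype_card, Nat.card_coe_set_eq, SimpleGraph.edgeSet_deleteEdges,
      Set.ncard_sdiff_singleton_of_mem he, ← SimpleGraph.coe_edgeFinset, Set.ncard_coe_finset]
  have hdeg : (G.deleteEdges {e}).maxDegree ≤ 3 :=
    SimpleGraph.maxDegree_le_of_forall_degree_le _ _ fun v =>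
      hcubic.degree_eq v ▸ SimpleGraph.degree_le_of_le (SimpleGraph.deleteEdges_le _)
  obtain ⟨k, hk⟩ := hodd
  have hpm := pmCount_middleGraph _ hnc hdeg (by rw [hcard, Nat.even_iff]; omega)
  rw [hcard] at hpm
  constructor <;> rw [hpm] <;> congr 2 <;> omega

/-- If `G` is a connected cubic graph with `n` vertices and `m = 3n/2`
edges, `m` odd, and `e` is a non-cut edge of `G`, then
`p(M(G - e)) = 2^(m-n) · 3^((2n-m-1)/2) = 2^(n/2) · 3^((n-2)/4)`. -/
theorem middle_graph_pm_cubic_odd_noncut {V : Type*} [Fintype V] [DecidableEq V]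
    (G : SimpleGraph V) [DecidableRel G.Adj]
    (hconn : G.Connected) (hcubic : G.IsRegularOfDegree 3)
    (hodd : Odd G.edgeFinset.card)
    (e : Sym2 V) (he : e ∈ G.edgeSet) (hnc : (G.deleteEdges {e}).Connected) :
    pmCount (middleGraph (G.deleteEdges {e})) =
        2 ^ (G.edgeFinset.card - Fintype.card V) *
          3 ^ ((2 * Fintype.card V - G.edgeFinset.card - 1) / 2) ∧
      pmCount (middleGraph (G.deleteEdges {e})) =
        2 ^ (Fintype.card V / 2) * 3 ^ ((Fintype.card V - 2) / 4) :=
  middle_graph_pm_cubic_odd_noncut_general G hcubic hodd e he hnc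
end

section
/- Let G be a connected cubic simple graph with n vertices and m = 3n/2 edges, m even, and let N be a perfect matching of the line graph L(G). Regard each element of N as a pair {e, f} of edges of G sharing an endpoint, hence as an edge of M(G) between two e-vertices. Then: (i) each pair {e, f} ∈ N lies in exactly one of the K4-subgraphs G_v of M(G), namely for the unique common endpoint v of e and f; (ii) each subgraph G_v contains at most one edge of N; and (iii) exactly m/2 = 3n/4 of the n subgraphs G_v contain exactly one edge of N, while the remaining n/4 contain none. -/
variable {V : Type*}

/-!
A member of a perfect matching `N` of `L(G)` is a pair of distinct edges with a common endpoint
`v`, unique because `G` is simple, so it is an edge of exactly one `G_v`. The members of `N` in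
`G_v` are disjoint pairs among the three edges at `v`, so there is at most one. Hence sending a
member to its common endpoint is a bijection from `N` onto the vertices whose `G_v` carries an
edge of `N`, and `|N| = m / 2 = 3n / 4`.
-/

section Matching

open Finset

variable {W : Type*} {H : SimpleGraph W} {P : Set (Sym2 W)}

def IsMatchSet (H : SimpleGraph W) (P : Set (Sym2 W)) : Prop :=
  P ⊆ H.edgeSet ∧ ∀ p ∈ P, ∀ q ∈ P, p ≠ q → ∀ a, a ∈ p → a ∉ q

theorem IsPerfMatchSet.isMatchSet (hP : IsPerfMatchSet H P) : IsMatchSet H P :=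
  ⟨hP.1, hP.2.1⟩

theorem IsMatchSet.card_biUnion_toFinset [DecidableEq W] (hP : IsMatchSet H P)
    {Q : Finset (Sym2 W)} (hQ : ↑Q ⊆ P) : #(Q.biUnion Sym2.toFinset) = 2 * #Q := by
  rw [card_biUnion, sum_const_nat, mul_comm]
  · exact fun p hp =>
      Sym2.card_toFinset_of_not_isDiag _ (H.not_isDiag_of_mem_edgeSet (hP.1 (hQ hp)))
  · intro p hp q hq hpq
    simp only [Function.onFun, disjoint_left, Sym2.mem_toFinset]
    exact hP.2 p (hQ hp) q (hQ hq) hpq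

theorem IsMatchSet.two_mul_ncard_le [Finite W] (hP : IsMatchSet H P) (S : Set W) :
    2 * {p ∈ P | ∀ a ∈ p, a ∈ S}.ncard ≤ S.ncard := by
  classical
  have hfin := Set.toFinite {p ∈ P | ∀ a ∈ p, a ∈ S}
  have hsub : ↑(hfin.toFinset.biUnion Sym2.toFinset) ⊆ S := by
    intro a ha
    simp only [coe_biUnion, Set.Finite.coe_toFinset, Set.mem_iUnion, mem_coe,
      Sym2.mem_toFinset] at ha
    obtain ⟨p, ⟨-, hpS⟩, hap⟩ := ha
    exact hpS a hap
  calc 2 * {p ∈ P | ∀ a ∈ p, a ∈ S}.ncard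
      = #(hfin.toFinset.biUnion Sym2.toFinset) := by
        rw [hP.card_biUnion_toFinset (by simp), Set.ncard_eq_toFinset_card _ hfin]
    _ ≤ S.ncard := by rw [← Set.ncard_coe_finset]; exact Set.ncard_le_ncard hsub

theorem IsPerfMatchSet.card_eq [Fintype W] (hP : IsPerfMatchSet H P) :
    Fintype.card W = 2 * P.ncard := by
  classical
  have hfin := Set.toFinite P
  have huniv : hfin.toFinset.biUnion Sym2.toFinset = univ := by
    refine eq_univ_of_forall fun a => ?_
    obtain ⟨p, hp, hap⟩ := hP.2.2 a
    exact mem_biUnion.2 ⟨p, by simpa using hp, Sym2.mem_toFinset.2 hap⟩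
  rw [← card_univ, ← huniv, hP.isMatchSet.card_biUnion_toFinset (by simp),
    Set.ncard_eq_toFinset_card _ hfin]

end Matching

theorem Set.ncard_setOf_ncard_eq_one {α β : Type*} (R : α → β → Prop) (N : Set β)
    (hsub : ∀ a, {b ∈ N | R a b}.Subsingleton) (huniq : ∀ b ∈ N, ∃! a, R a b) :
    {a | {b ∈ N | R a b}.ncard = 1}.ncard = N.ncard := by
  choose f hf hf_uniq using huniq
  refine (Set.ncard_congr f (fun b hb => ?_) (fun b b' hb hb' hbb' => ?_) fun a ha => ?_).symm
  · rw [Set.mem_ofPred_eq, (hsub _).eq_singleton_of_mem ⟨hb, hf b hb⟩, Set.ncard_singleton]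
  · exact hsub (f b hb) ⟨hb, hf b hb⟩ ⟨hb', hbb' ▸ hf b' hb'⟩
  · obtain ⟨b, hb⟩ := Set.ncard_eq_one.1 ha
    have hbN : b ∈ {b ∈ N | R a b} := hb ▸ rfl
    exact ⟨b, hbN.1, (hf_uniq b hbN.1 a hbN.2).symm⟩

section LineGraph

variable {G : SimpleGraph V}

theorem SimpleGraph.IsRegularOfDegree.mul_card_eq_two_mul_card_edgeFinset [Fintype V]
    [DecidableRel G.Adj] {d : ℕ} (h : G.IsRegularOfDegree d) :
    d * Fintype.card V = 2 * G.edgeFinset.card := by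
  rw [← G.sum_degrees_eq_twice_card_edges, Finset.sum_congr rfl fun v _ => h v,
    Finset.sum_const, Finset.card_univ, smul_eq_mul, mul_comm]

theorem ncard_setOf_mem_edgeSet_eq_degree [Fintype V] [DecidableRel G.Adj] (v : V) :
    {e : G.edgeSet | v ∈ (e : Sym2 V)}.ncard = G.degree v := by
  classical
  have hpre : {e : G.edgeSet | v ∈ (e : Sym2 V)} = Subtype.val ⁻¹' G.incidenceSet v := by
    ext e
    simp [SimpleGraph.incidenceSet]
  rw [hpre, Set.ncard_preimage_of_injective_subset_range Subtype.val_injective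
      (by simpa using G.incidenceSet_subset v), ← Nat.card_coe_set_eq, Nat.card_eq_fintype_card,
    SimpleGraph.card_incidenceSet_eq_degree]

theorem lineGraph_adj_existsUnique_mem {e f : G.edgeSet} (h : (lineGraph G).Adj e f) :
    ∃! v, v ∈ (e : Sym2 V) ∧ v ∈ (f : Sym2 V) := by
  obtain ⟨hef, v, hv⟩ := h
  refine ⟨v, hv, fun w hw => by_contra fun hwv => hef (Subtype.ext ?_)⟩
  exact ((Sym2.mem_and_mem_iff hwv).1 ⟨hw.1, hv.1⟩).trans
    ((Sym2.mem_and_mem_iff hwv).1 ⟨hw.2, hv.2⟩).symm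

theorem existsUnique_forall_mem_of_mem_edgeSet_lineGraph {p : Sym2 G.edgeSet}
    (hp : p ∈ (lineGraph G).edgeSet) : ∃! v : V, ∀ x ∈ p, v ∈ (x : Sym2 V) := by
  induction p using Sym2.ind with
  | _ e f => simpa only [Sym2.mem_iff, forall_eq_or_imp, forall_eq] using
      lineGraph_adj_existsUnique_mem hp

theorem IsMatchSet.subsingleton_sep_forall_mem_of_degree_le_three [Fintype V]
    [DecidableRel G.Adj] {N : Set (Sym2 G.edgeSet)} (hN : IsMatchSet (lineGraph G) N) {v : V}
    (hv : G.degree v ≤ 3) : {p ∈ N | ∀ x ∈ p, v ∈ (x : Sym2 V)}.Subsingleton := by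
  have h : 2 * {p ∈ N | ∀ x ∈ p, v ∈ (x : Sym2 V)}.ncard ≤ G.degree v :=
    ncard_setOf_mem_edgeSet_eq_degree (G := G) v ▸ hN.two_mul_ncard_le _
  exact Set.ncard_le_one_iff_subsingleton.1 (by omega)

end LineGraph

theorem line_graph_pm_K4_distribution_general {V : Type*} [Fintype V]
    (G : SimpleGraph V) [DecidableRel G.Adj]
    (hcubic : G.IsRegularOfDegree 3)
    (N : Set (Sym2 G.edgeSet)) (hN : IsPerfMatchSet (lineGraph G) N) :
    (∀ e f : G.edgeSet, s(e, f) ∈ N →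
        ∃! v : V, v ∈ (e : Sym2 V) ∧ v ∈ (f : Sym2 V)) ∧
    (∀ v : V, {p ∈ N | ∀ x ∈ p, v ∈ (x : Sym2 V)}.ncard ≤ 1) ∧
    {v : V | {p ∈ N | ∀ x ∈ p, v ∈ (x : Sym2 V)}.ncard = 1}.ncard =
      3 * Fintype.card V / 4 ∧
    {v : V | {p ∈ N | ∀ x ∈ p, v ∈ (x : Sym2 V)}.ncard = 0}.ncard =
      Fintype.card V / 4 := by
  have hstar (v : V) : {p ∈ N | ∀ x ∈ p, v ∈ (x : Sym2 V)}.Subsingleton :=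
    hN.isMatchSet.subsingleton_sep_forall_mem_of_degree_le_three (hcubic v).le
  have hle (v : V) := Set.ncard_le_one_iff_subsingleton.2 (hstar v)
  have hone := Set.ncard_setOf_ncard_eq_one _ N hstar
    fun p hp => existsUnique_forall_mem_of_mem_edgeSet_lineGraph (hN.1 hp)
  have hzero : {v : V | {p ∈ N | ∀ x ∈ p, v ∈ (x : Sym2 V)}.ncard = 0} =
      {v : V | {p ∈ N | ∀ x ∈ p, v ∈ (x : Sym2 V)}.ncard = 1}ᶜ := by
    ext v
    have := hle v
    simp only [Set.mem_ofPred_eq, Set.mem_compl_iff]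
    omega
  -- `3n = 2m` and `m = 2|N|`
  have hedges := hcubic.mul_card_eq_two_mul_card_edgeFinset
  have hmatch := hN.card_eq
  rw [← SimpleGraph.edgeFinset_card] at hmatch
  refine ⟨fun e f hef => lineGraph_adj_existsUnique_mem (hN.1 hef), hle, by omega, ?_⟩
  rw [hzero, Set.ncard_compl, hone, Nat.card_eq_fintype_card]
  omega

/-- Let `G` be a connected cubic graph with `n` vertices and `m = 3n/2`
edges, `m` even, and let `N` be a perfect matching of the line graph `L(G)`.  Then:
(i) every pair `{e,f} ∈ N` lies in exactly one `K₄`-subgraph `G_v` of `M(G)`, namely for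
the unique common endpoint `v` of `e` and `f`; (ii) each `G_v` contains at most one edge
of `N`; (iii) exactly `m/2 = 3n/4` of the `G_v` contain exactly one edge of `N` and the
remaining `n/4` contain none. -/
theorem line_graph_pm_K4_distribution {V : Type*} [Fintype V] [DecidableEq V]
    (G : SimpleGraph V) [DecidableRel G.Adj]
    (hconn : G.Connected) (hcubic : G.IsRegularOfDegree 3)
    (heven : Even G.edgeFinset.card)
    (N : Set (Sym2 G.edgeSet)) (hN : IsPerfMatchSet (lineGraph G) N) :
    (∀ e f : G.edgeSet, s(e, f) ∈ N →
        ∃! v : V, v ∈ (e : Sym2 V) ∧ v ∈ (f : Sym2 V)) ∧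
    (∀ v : V, {p ∈ N | ∀ x ∈ p, v ∈ (x : Sym2 V)}.ncard ≤ 1) ∧
    {v : V | {p ∈ N | ∀ x ∈ p, v ∈ (x : Sym2 V)}.ncard = 1}.ncard =
      3 * Fintype.card V / 4 ∧
    {v : V | {p ∈ N | ∀ x ∈ p, v ∈ (x : Sym2 V)}.ncard = 0}.ncard =
      Fintype.card V / 4 :=
  line_graph_pm_K4_distribution_general G hcubic N hN
end

section
/- Let G be a connected cubic simple graph with n vertices and m = 3n/2 edges, m even. Then every perfect matching of M(G) is of the form M'_N ∪ M for some perfect matching N of the line graph L(G) and some perfect matching M of the union of the subgraphs G_v containing no edge of N, where M'_N = { {v, e3} : v ∈ V(G) such that G_v contains the edge {e1, e2} of N, with e3 the third edge incident to v }. Equivalently, the set of all perfect matchings of M(G) is the union over all perfect matchings N of L(G) of the families M_N* = { M'_N ∪ M }. -/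
variable {V : Type*}

/-- For a vertex `v` of `G`, the set of vertices of the middle graph `M(G)` consisting of
the `v`-vertex `v` together with the `e`-vertices corresponding to the edges of `G`
incident with `v`.  For a cubic graph this induces a `K₄` in `M(G)`, denoted `G_v`. -/
def K4set (G : SimpleGraph V) (v : V) : Set (V ⊕ G.edgeSet) :=
  {a | a = Sum.inl v ∨ ∃ e : G.edgeSet, v ∈ (e : Sym2 V) ∧ a = Sum.inr e}

/-- Given a set `N` of edges of the line graph of `G`, the set of vertices `v` of `G`
such that the `K₄`-subgraph `G_v` of `M(G)` contains no edge of `N`, i.e. no member of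
`N` has both endpoints incident with `v`. -/
def badSet (G : SimpleGraph V) (N : Set (Sym2 G.edgeSet)) : Set V :=
  {v | ∀ p ∈ N, ¬ ∀ x ∈ p, v ∈ (x : Sym2 V)}

/-- Given a set `N` of edges of the line graph of `G`, the set `M'_N` of those edges of
`M(G)` of the form `{v, e₃}` where the `K₄`-subgraph `G_v` contains an edge `{e₁, e₂}`
of `N` and `e₃` is the third edge of `G` incident with `v`. -/
def matchEdges (G : SimpleGraph V) (N : Set (Sym2 G.edgeSet)) :
    Set (Sym2 (V ⊕ G.edgeSet)) :=
  {p | ∃ (v : V) (e1 e2 e3 : G.edgeSet), s(e1, e2) ∈ N ∧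
    v ∈ (e1 : Sym2 V) ∧ v ∈ (e2 : Sym2 V) ∧ v ∈ (e3 : Sym2 V) ∧
    e3 ≠ e1 ∧ e3 ≠ e2 ∧ p = s(Sum.inl v, Sum.inr e3)}

/-- The family `M_N*` of perfect matchings of `M(G)` of the form `M'_N ∪ M`, where `M`
ranges over the perfect matchings of the union of the `K₄`-subgraphs `G_v` containing
no edge of `N`. -/
def MNstar (G : SimpleGraph V) (N : Set (Sym2 G.edgeSet)) :
    Set (Set (Sym2 (V ⊕ G.edgeSet))) :=
  {P | ∃ M : Set (Sym2 (V ⊕ G.edgeSet)),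
    (∀ p ∈ M, p ∈ (middleGraph G).edgeSet ∧ ∃ v ∈ badSet G N, ∀ a ∈ p, a ∈ K4set G v) ∧
    (∀ p ∈ M, ∀ q ∈ M, p ≠ q → ∀ a, a ∈ p → a ∉ q) ∧
    (∀ v ∈ badSet G N, ∀ a ∈ K4set G v, ∃ p ∈ M, a ∈ p) ∧
    P = matchEdges G N ∪ M}


/-!
Every edge of `M(G)` lies in exactly one `K₄` subgraph `G_v`, so each edge `e` of `G` is matched
by `P` inside `G_v` for exactly one endpoint `v` of `e`. At a vertex `v`, the edge matched to `v`
itself is matched inside `G_v`, and since `G` is cubic the other two edges at `v` are either both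
matched inside `G_v` or both not. The pairs of edges at a vertex that are not matched there form a
perfect matching `N` of `L(G)`, because an edge not matched at one endpoint is matched at the other.
The vertices carrying such a pair contribute exactly the edges of `M'_N` to `P`; every other edge
of `P` lies in some `G_v` free of `N`.
-/

theorem Sym2.eq_of_mem_of_mem_of_ne {α : Type*} {z z' : Sym2 α} {x y : α} (hzz' : z ≠ z')
    (hx : x ∈ z) (hx' : x ∈ z') (hy : y ∈ z) (hy' : y ∈ z') : x = y := by
  by_contra hxy
  exact hzz' (((Sym2.mem_and_mem_iff hxy).1 ⟨hx, hy⟩).trans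
    ((Sym2.mem_and_mem_iff hxy).1 ⟨hx', hy'⟩).symm)

namespace IsPerfMatchSet

variable {W : Type*} {H : SimpleGraph W} {P : Set (Sym2 W)}

theorem eq_of_mem (hP : IsPerfMatchSet H P) {p q : Sym2 W} (hp : p ∈ P) (hq : q ∈ P) {a : W}
    (hap : a ∈ p) (haq : a ∈ q) : p = q :=
  by_contra fun hpq => hP.2.1 p hp q hq hpq a hap haq

theorem eq_of_mk_mem (hP : IsPerfMatchSet H P) {a b c : W} (hb : s(a, b) ∈ P)
    (hc : s(a, c) ∈ P) : b = c :=
  Sym2.congr_right.1 (hP.eq_of_mem hb hc (Sym2.mem_mk_left a b) (Sym2.mem_mk_left a c))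

theorem exists_mk_mem (hP : IsPerfMatchSet H P) (a : W) : ∃ b, s(a, b) ∈ P := by
  obtain ⟨p, hp, hap⟩ := hP.2.2 a
  obtain ⟨b, rfl⟩ := Sym2.mem_iff_exists.1 hap
  exact ⟨b, hp⟩

end IsPerfMatchSet

namespace SimpleGraph.IsRegularOfDegree

variable {G : SimpleGraph V} [G.LocallyFinite] {v : V}

theorem eq_or_eq_or_eq_of_mem (hG : G.IsRegularOfDegree 3) {e₁ e₂ e₃ e : G.edgeSet}
    (h₁ : v ∈ (e₁ : Sym2 V)) (h₂ : v ∈ (e₂ : Sym2 V)) (h₃ : v ∈ (e₃ : Sym2 V))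
    (h₁₂ : e₁ ≠ e₂) (h₁₃ : e₁ ≠ e₃) (h₂₃ : e₂ ≠ e₃) (he : v ∈ (e : Sym2 V)) :
    e = e₁ ∨ e = e₂ ∨ e = e₃ := by
  classical
  have hsub : {(e₁ : Sym2 V), (e₂ : Sym2 V), (e₃ : Sym2 V)} ⊆ G.incidenceFinset v := by
    intro x hx
    simp only [Finset.mem_insert, Finset.mem_singleton] at hx
    rcases hx with rfl | rfl | rfl <;> simp [incidenceSet, *]
  have hcard : ({(e₁ : Sym2 V), (e₂ : Sym2 V), (e₃ : Sym2 V)} : Finset _).card = 3 :=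
    Finset.card_eq_three.2 ⟨_, _, _, Subtype.coe_ne_coe.2 h₁₂, Subtype.coe_ne_coe.2 h₁₃,
      Subtype.coe_ne_coe.2 h₂₃, rfl⟩
  have hall := Finset.eq_of_subset_of_card_le hsub
    (by rw [hcard, card_incidenceFinset_eq_degree, hG v])
  have : (e : Sym2 V) ∈ G.incidenceFinset v := by simp [incidenceSet, he]
  rw [← hall] at this
  simpa [Subtype.ext_iff] using this

theorem exists_mem_ne_ne (hG : G.IsRegularOfDegree 3) (v : V) (e f : G.edgeSet) :
    ∃ g : G.edgeSet, v ∈ (g : Sym2 V) ∧ g ≠ e ∧ g ≠ f := by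
  classical
  obtain ⟨g, hg, hgef⟩ := Finset.exists_mem_notMem_of_card_lt_card
    (s := {(e : Sym2 V), (f : Sym2 V)}) (t := G.incidenceFinset v)
    (by rw [card_incidenceFinset_eq_degree, hG v]; exact Finset.card_le_two.trans_lt (by norm_num))
  rw [mem_incidenceFinset] at hg
  refine ⟨⟨g, hg.1⟩, hg.2, ?_, ?_⟩ <;> rintro rfl <;> simp at hgef

end SimpleGraph.IsRegularOfDegree

section MiddleGraph

variable {G : SimpleGraph V} {u v w : V} {e f : G.edgeSet}

@[simp]
theorem middleGraph_adj_inl_inr : (middleGraph G).Adj (Sum.inl u) (Sum.inr e) ↔ u ∈ (e : Sym2 V) :=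
  Iff.rfl

@[simp]
theorem middleGraph_adj_inr_inl : (middleGraph G).Adj (Sum.inr e) (Sum.inl u) ↔ u ∈ (e : Sym2 V) :=
  Iff.rfl

@[simp]
theorem not_middleGraph_adj_inl_inl : ¬(middleGraph G).Adj (Sum.inl u) (Sum.inl v) :=
  id

@[simp]
theorem inl_mem_K4set : (Sum.inl u : V ⊕ G.edgeSet) ∈ K4set G v ↔ u = v := by
  simp [K4set]

@[simp]
theorem inr_mem_K4set : Sum.inr e ∈ K4set G v ↔ v ∈ (e : Sym2 V) := by
  simp [K4set]

theorem exists_subset_K4set_of_mem_edgeSet {p : Sym2 (V ⊕ G.edgeSet)}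
    (hp : p ∈ (middleGraph G).edgeSet) : ∃ v, ∀ a ∈ p, a ∈ K4set G v := by
  induction p using Sym2.ind with
  | _ a b =>
    rcases a with u | e <;> rcases b with w | f <;> simp at hp
    · exact ⟨u, by simpa using hp⟩
    · exact ⟨w, by simpa using hp⟩
    · obtain ⟨-, v, hve, hvf⟩ := hp
      exact ⟨v, by simpa using ⟨hve, hvf⟩⟩

theorem eq_of_subset_K4set_of_mem_edgeSet {p : Sym2 (V ⊕ G.edgeSet)}
    (hp : p ∈ (middleGraph G).edgeSet) (hv : ∀ a ∈ p, a ∈ K4set G v)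
    (hw : ∀ a ∈ p, a ∈ K4set G w) : v = w := by
  induction p using Sym2.ind with
  | _ a b =>
    simp only [Sym2.forall_mem_pair] at hv hw
    rcases a with u | e <;> rcases b with u' | f <;> simp at hp hv hw
    · exact hv.1.symm.trans hw.1
    · exact hv.2.symm.trans hw.2
    · exact Sym2.eq_of_mem_of_mem_of_ne (Subtype.coe_ne_coe.2 hp.1) hv.1 hv.2 hw.1 hw.2

theorem eq_mk_of_subset_K4set {p : Sym2 (V ⊕ G.edgeSet)} (hp : p ∈ (middleGraph G).edgeSet)
    (hpv : ∀ a ∈ p, a ∈ K4set G v) :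
    (∃ e : G.edgeSet, p = s(Sum.inl v, Sum.inr e)) ∨
      ∃ e f : G.edgeSet, e ≠ f ∧ v ∈ (e : Sym2 V) ∧ v ∈ (f : Sym2 V) ∧
        p = s(Sum.inr e, Sum.inr f) := by
  induction p using Sym2.ind with
  | _ a b =>
    simp only [Sym2.forall_mem_pair] at hpv
    rcases a with u | e <;> rcases b with u' | f <;> simp at hp hpv
    · exact .inl ⟨f, by rw [hpv.1]⟩
    · exact .inl ⟨e, by rw [hpv.2, Sym2.eq_swap]⟩
    · exact .inr ⟨e, f, hp.1, hpv.1, hpv.2, rfl⟩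

end MiddleGraph

section MatchedAt

variable {G : SimpleGraph V} {P : Set (Sym2 (V ⊕ G.edgeSet))} {v w : V} {e f g : G.edgeSet}

def MatchedAt (P : Set (Sym2 (V ⊕ G.edgeSet))) (v : V) (e : G.edgeSet) : Prop :=
  ∃ p ∈ P, Sum.inr e ∈ p ∧ ∀ a ∈ p, a ∈ K4set G v

theorem MatchedAt.mem (h : MatchedAt P v e) : v ∈ (e : Sym2 V) := by
  obtain ⟨p, -, hep, hp⟩ := h
  simpa using hp _ hep

theorem matchedAt_of_mk_inr_inr_mem (h : s(Sum.inr e, Sum.inr f) ∈ P) (he : v ∈ (e : Sym2 V))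
    (hf : v ∈ (f : Sym2 V)) : MatchedAt P v e :=
  ⟨_, h, Sym2.mem_mk_left _ _, by simpa using ⟨he, hf⟩⟩

theorem MatchedAt.eq (hP : IsPerfMatchSet (middleGraph G) P) (hv : MatchedAt P v e)
    (hw : MatchedAt P w e) : v = w := by
  obtain ⟨p, hp, hep, hpv⟩ := hv
  obtain ⟨q, hq, heq, hqw⟩ := hw
  obtain rfl := hP.eq_of_mem hp hq hep heq
  exact eq_of_subset_K4set_of_mem_edgeSet (hP.1 hp) hpv hqw

theorem exists_matchedAt (hP : IsPerfMatchSet (middleGraph G) P) (e : G.edgeSet) :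
    ∃ v, MatchedAt P v e := by
  obtain ⟨p, hp, hep⟩ := hP.2.2 (Sum.inr e)
  obtain ⟨v, hv⟩ := exists_subset_K4set_of_mem_edgeSet (hP.1 hp)
  exact ⟨v, p, hp, hep, hv⟩

theorem exists_mk_inl_inr_mem (hP : IsPerfMatchSet (middleGraph G) P) (v : V) :
    ∃ e : G.edgeSet, s(Sum.inl v, Sum.inr e) ∈ P := by
  obtain ⟨b | e, hb⟩ := hP.exists_mk_mem (Sum.inl v)
  · exact absurd (hP.1 hb) (by simp)
  · exact ⟨e, hb⟩

theorem matchedAt_of_mk_inl_inr_mem (hP : IsPerfMatchSet (middleGraph G) P)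
    (h : s(Sum.inl v, Sum.inr e) ∈ P) : MatchedAt P v e :=
  ⟨_, h, Sym2.mem_mk_right _ _, by simpa using (hP.1 h : v ∈ (e : Sym2 V))⟩

/-- The edge matched to `v` itself is matched inside `G_v`; were the third edge at `v` matched
there too, its partner in `P` would have to be `e`. -/
theorem exists_ne_not_matchedAt [G.LocallyFinite] (hG : G.IsRegularOfDegree 3)
    (hP : IsPerfMatchSet (middleGraph G) P) (he : v ∈ (e : Sym2 V)) (hne : ¬MatchedAt P v e) :
    ∃ f ≠ e, v ∈ (f : Sym2 V) ∧ ¬MatchedAt P v f := by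
  obtain ⟨m, hm⟩ := exists_mk_inl_inr_mem hP v
  have hmv := matchedAt_of_mk_inl_inr_mem hP hm
  have hme : m ≠ e := by rintro rfl; exact hne hmv
  obtain ⟨f, hf, hfe, hfm⟩ := hG.exists_mem_ne_ne v e m
  refine ⟨f, hfe, hf, ?_⟩
  rintro ⟨q, hq, hfq, hqv⟩
  obtain ⟨b, rfl⟩ := Sym2.mem_iff_exists.1 hfq
  rcases b with u | c
  · obtain rfl : u = v := by simpa using hqv _ (Sym2.mem_mk_right _ _)
    rw [Sym2.eq_swap] at hq
    exact hfm (Sum.inr_injective (hP.eq_of_mk_mem hq hm))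
  · have hc : v ∈ (c : Sym2 V) := by simpa using hqv _ (Sym2.mem_mk_right _ _)
    have hcf : c ≠ f := by rintro rfl; exact ((SimpleGraph.mem_edgeSet _).1 (hP.1 hq)).ne rfl
    have hcm : c ≠ m := by
      rintro rfl
      rw [Sym2.eq_swap] at hq hm
      exact Sum.inr_ne_inl (hP.eq_of_mk_mem hq hm)
    rcases hG.eq_or_eq_or_eq_of_mem he hmv.mem hf hme.symm hfe.symm hfm.symm hc with
      rfl | rfl | rfl
    · rw [Sym2.eq_swap] at hq
      exact hne (matchedAt_of_mk_inr_inr_mem hq hc hf)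
    · exact hcm rfl
    · exact hcf rfl

theorem eq_or_eq_or_eq_of_not_matchedAt [G.LocallyFinite] (hG : G.IsRegularOfDegree 3)
    (hP : IsPerfMatchSet (middleGraph G) P) (he : v ∈ (e : Sym2 V)) (hf : v ∈ (f : Sym2 V))
    (hg : v ∈ (g : Sym2 V)) (he' : ¬MatchedAt P v e) (hf' : ¬MatchedAt P v f)
    (hg' : ¬MatchedAt P v g) : e = f ∨ e = g ∨ f = g := by
  by_contra! hne
  obtain ⟨m, hm⟩ := exists_mk_inl_inr_mem hP v
  have hmv := matchedAt_of_mk_inl_inr_mem hP hm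
  rcases hG.eq_or_eq_or_eq_of_mem he hf hg hne.1 hne.2.1 hne.2.2 hmv.mem with rfl | rfl | rfl
  exacts [he' hmv, hf' hmv, hg' hmv]

end MatchedAt

section UnmatchedPairs

variable {G : SimpleGraph V} {P : Set (Sym2 (V ⊕ G.edgeSet))}

def unmatchedPairs (P : Set (Sym2 (V ⊕ G.edgeSet))) : Set (Sym2 G.edgeSet) :=
  {p | ¬p.IsDiag ∧ ∃ v, ∀ e ∈ p, v ∈ (e : Sym2 V) ∧ ¬MatchedAt P v e}

theorem mk_mem_unmatchedPairs {v : V} {e f : G.edgeSet} (hef : e ≠ f)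
    (he : v ∈ (e : Sym2 V)) (hf : v ∈ (f : Sym2 V)) (he' : ¬MatchedAt P v e)
    (hf' : ¬MatchedAt P v f) : s(e, f) ∈ unmatchedPairs P :=
  ⟨by simpa using hef, v, Sym2.forall_mem_pair.2 ⟨⟨he, he'⟩, ⟨hf, hf'⟩⟩⟩

theorem unmatchedPairs_subset_edgeSet : unmatchedPairs P ⊆ (lineGraph G).edgeSet := by
  intro p hp
  induction p using Sym2.ind with
  | _ e f =>
    obtain ⟨hef, v, hv⟩ := hp
    rw [Sym2.forall_mem_pair] at hv
    exact ⟨by simpa using hef, v, hv.1.1, hv.2.1⟩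

theorem eq_of_mem_unmatchedPairs [G.LocallyFinite] (hG : G.IsRegularOfDegree 3)
    (hP : IsPerfMatchSet (middleGraph G) P) {p q : Sym2 G.edgeSet} (hp : p ∈ unmatchedPairs P)
    (hq : q ∈ unmatchedPairs P) {a : G.edgeSet} (hap : a ∈ p) (haq : a ∈ q) : p = q := by
  obtain ⟨hpd, u, hu⟩ := hp
  obtain ⟨hqd, w, hw⟩ := hq
  -- `a` is matched inside `G_x` for an endpoint `x`, which must be one of `u`, `w`
  obtain rfl : u = w := by
    by_contra huw
    obtain ⟨x, hx⟩ := exists_matchedAt hP a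
    have ha := (Sym2.mem_and_mem_iff huw).1 ⟨(hu a hap).1, (hw a haq).1⟩
    rcases Sym2.mem_iff.1 (ha ▸ hx.mem) with rfl | rfl
    exacts [(hu a hap).2 hx, (hw a haq).2 hx]
  obtain ⟨b, rfl⟩ := Sym2.mem_iff_exists.1 hap
  obtain ⟨c, rfl⟩ := Sym2.mem_iff_exists.1 haq
  simp only [Sym2.forall_mem_pair] at hu hw
  rw [Sym2.mk_isDiag_iff] at hpd hqd
  rcases eq_or_eq_or_eq_of_not_matchedAt hG hP hu.1.1 hu.2.1 hw.2.1 hu.1.2 hu.2.2 hw.2.2 with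
    h | h | h
  exacts [(hpd h).elim, (hqd h).elim, by rw [h]]

theorem exists_mem_unmatchedPairs [G.LocallyFinite] (hG : G.IsRegularOfDegree 3)
    (hP : IsPerfMatchSet (middleGraph G) P) (e : G.edgeSet) : ∃ p ∈ unmatchedPairs P, e ∈ p := by
  obtain ⟨x, hx⟩ := exists_matchedAt hP e
  obtain ⟨y, hxy⟩ := Sym2.mem_iff_exists.1 hx.mem
  have hy : y ∈ (e : Sym2 V) := hxy ▸ Sym2.mem_mk_right x y
  have hyx : y ≠ x := (G.ne_of_adj (hxy ▸ e.2 : s(x, y) ∈ G.edgeSet)).symm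
  have hy' : ¬MatchedAt P y e := fun h => hyx (h.eq hP hx)
  obtain ⟨f, hfe, hf, hf'⟩ := exists_ne_not_matchedAt hG hP hy hy'
  exact ⟨s(e, f), mk_mem_unmatchedPairs hfe.symm hy hf hy' hf', Sym2.mem_mk_left e f⟩

theorem isPerfMatchSet_unmatchedPairs [G.LocallyFinite] (hG : G.IsRegularOfDegree 3)
    (hP : IsPerfMatchSet (middleGraph G) P) : IsPerfMatchSet (lineGraph G) (unmatchedPairs P) :=
  ⟨unmatchedPairs_subset_edgeSet,
    fun _ hp _ hq hpq _ hap haq => hpq (eq_of_mem_unmatchedPairs hG hP hp hq hap haq),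
    exists_mem_unmatchedPairs hG hP⟩

theorem mem_badSet_unmatchedPairs_iff [G.LocallyFinite] (hG : G.IsRegularOfDegree 3)
    (hP : IsPerfMatchSet (middleGraph G) P) {v : V} :
    v ∈ badSet G (unmatchedPairs P) ↔ ∀ e : G.edgeSet, v ∈ (e : Sym2 V) → MatchedAt P v e := by
  constructor
  · intro hv e he
    by_contra he'
    obtain ⟨f, hfe, hf, hf'⟩ := exists_ne_not_matchedAt hG hP he he'
    refine hv _ (mk_mem_unmatchedPairs hfe.symm he hf he' hf') ?_
    exact Sym2.forall_mem_pair.2 ⟨he, hf⟩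
  · intro h p hp hpv
    induction p using Sym2.ind with
    | _ e f =>
      obtain ⟨hef, u, hu⟩ := hp
      simp only [Sym2.forall_mem_pair] at hu hpv
      have hef : (e : Sym2 V) ≠ f := Subtype.coe_ne_coe.2 (by simpa using hef)
      obtain rfl := Sym2.eq_of_mem_of_mem_of_ne hef hu.1.1 hu.2.1 hpv.1 hpv.2
      exact hu.1.2 (h e hu.1.1)

theorem matchEdges_unmatchedPairs_subset [G.LocallyFinite] (hG : G.IsRegularOfDegree 3)
    (hP : IsPerfMatchSet (middleGraph G) P) : matchEdges G (unmatchedPairs P) ⊆ P := by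
  rintro _ ⟨v, e₁, e₂, e₃, ⟨hd, u, hu⟩, h₁, h₂, h₃, h₃₁, h₃₂, rfl⟩
  simp only [Sym2.forall_mem_pair] at hu
  have h₁₂ : e₁ ≠ e₂ := by simpa using hd
  obtain rfl := Sym2.eq_of_mem_of_mem_of_ne (Subtype.coe_ne_coe.2 h₁₂) hu.1.1 hu.2.1 h₁ h₂
  obtain ⟨m, hm⟩ := exists_mk_inl_inr_mem hP u
  have hmu := matchedAt_of_mk_inl_inr_mem hP hm
  rcases hG.eq_or_eq_or_eq_of_mem h₁ h₂ h₃ h₁₂ h₃₁.symm h₃₂.symm hmu.mem with rfl | rfl | rfl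
  exacts [(hu.1.2 hmu).elim, (hu.2.2 hmu).elim, hm]

theorem mem_matchEdges_of_subset_K4set [G.LocallyFinite] (hG : G.IsRegularOfDegree 3)
    (hP : IsPerfMatchSet (middleGraph G) P) {v : V} {p : Sym2 (V ⊕ G.edgeSet)} (hp : p ∈ P)
    (hpv : ∀ a ∈ p, a ∈ K4set G v) (hv : v ∉ badSet G (unmatchedPairs P)) :
    p ∈ matchEdges G (unmatchedPairs P) := by
  rw [mem_badSet_unmatchedPairs_iff hG hP] at hv
  push Not at hv
  obtain ⟨e, he, he'⟩ := hv
  obtain ⟨f, hfe, hf, hf'⟩ := exists_ne_not_matchedAt hG hP he he'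
  rcases eq_mk_of_subset_K4set (hP.1 hp) hpv with ⟨g, rfl⟩ | ⟨g, h, hgh, hg, hh, rfl⟩
  · have hg' : MatchedAt P v g := matchedAt_of_mk_inl_inr_mem hP hp
    refine ⟨v, e, f, g, mk_mem_unmatchedPairs hfe.symm he hf he' hf', he, hf, hg'.mem,
      ?_, ?_, rfl⟩ <;> rintro rfl
    exacts [he' hg', hf' hg']
  · have hg' : MatchedAt P v g := matchedAt_of_mk_inr_inr_mem hp hg hh
    have hh' : MatchedAt P v h := matchedAt_of_mk_inr_inr_mem (Sym2.eq_swap ▸ hp) hh hg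
    have hge : g ≠ e := by rintro rfl; exact he' hg'
    have hgf : g ≠ f := by rintro rfl; exact hf' hg'
    rcases hG.eq_or_eq_or_eq_of_mem he hf hg hfe.symm hge.symm hgf.symm hh with rfl | rfl | rfl
    exacts [(he' hh').elim, (hf' hh').elim, (hgh rfl).elim]

theorem mem_MNstar_unmatchedPairs [G.LocallyFinite] (hG : G.IsRegularOfDegree 3)
    (hP : IsPerfMatchSet (middleGraph G) P) : P ∈ MNstar G (unmatchedPairs P) := by
  refine ⟨{p ∈ P | ∃ v ∈ badSet G (unmatchedPairs P), ∀ a ∈ p, a ∈ K4set G v},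
    fun p hp => ⟨hP.1 hp.1, hp.2⟩, fun p hp q hq => hP.2.1 p hp.1 q hq.1, ?_, ?_⟩
  · intro v hv a ha
    have hall := (mem_badSet_unmatchedPairs_iff hG hP).1 hv
    rcases ha with rfl | ⟨e, he, rfl⟩
    · obtain ⟨m, hm⟩ := exists_mk_inl_inr_mem hP v
      have hmv : v ∈ (m : Sym2 V) := (matchedAt_of_mk_inl_inr_mem hP hm).mem
      exact ⟨_, ⟨hm, v, hv, by simpa using hmv⟩, Sym2.mem_mk_left _ _⟩
    · obtain ⟨p, hp, hep, hpv⟩ := hall e he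
      exact ⟨p, ⟨hp, v, hv, hpv⟩, hep⟩
  · ext p
    refine ⟨fun hp => ?_, ?_⟩
    · obtain ⟨v, hpv⟩ := exists_subset_K4set_of_mem_edgeSet (hP.1 hp)
      by_cases hv : v ∈ badSet G (unmatchedPairs P)
      · exact .inr ⟨hp, v, hv, hpv⟩
      · exact .inl (mem_matchEdges_of_subset_K4set hG hP hp hpv hv)
    · rintro (hp | hp)
      exacts [matchEdges_unmatchedPairs_subset hG hP hp, hp.1]

end UnmatchedPairs

theorem middle_graph_pm_in_MNstar_general {V : Type*} [Fintype V]
    (G : SimpleGraph V) [DecidableRel G.Adj]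
    (hcubic : G.IsRegularOfDegree 3) :
    ∀ P : Set (Sym2 (V ⊕ G.edgeSet)), IsPerfMatchSet (middleGraph G) P →
      ∃ N : Set (Sym2 G.edgeSet),
        IsPerfMatchSet (lineGraph G) N ∧ P ∈ MNstar G N :=
  fun _ hP => ⟨_, isPerfMatchSet_unmatchedPairs hcubic hP, mem_MNstar_unmatchedPairs hcubic hP⟩

/-- Let `G` be a connected cubic graph with `n` vertices and an even
number of edges.  Then every perfect matching of `M(G)` belongs to the family `M_N*` for
some perfect matching `N` of the line graph `L(G)`. -/
theorem middle_graph_pm_in_MNstar {V : Type*} [Fintype V] [DecidableEq V]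
    (G : SimpleGraph V) [DecidableRel G.Adj]
    (hconn : G.Connected) (hcubic : G.IsRegularOfDegree 3)
    (heven : Even G.edgeFinset.card) :
    ∀ P : Set (Sym2 (V ⊕ G.edgeSet)), IsPerfMatchSet (middleGraph G) P →
      ∃ N : Set (Sym2 G.edgeSet),
        IsPerfMatchSet (lineGraph G) N ∧ P ∈ MNstar G N :=
  middle_graph_pm_in_MNstar_general G hcubic
end
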